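/- arXiv:2212.13728 — 5 statements merged into one kernel-verified Lean document; each statement's English description precedes it below -/
import Mathlib

section
/- For every σ ∈ (0,1] there exists κ ∈ (0,1] such that the following holds for every field F, every n ∈ ℕ, and every matrix A ∈ F^{n×n}: if I ⊆ [n] is a random subset containing each element independently with probability σ, then with probability at least 1 − 2e^{−κ·rank(A)} the principal submatrix A_{|I×I} (the submatrix of A induced by the rows and columns indexed by I) has rank at least κ·rank(A). -/
open Classical in
/-- The probability, under the distribution on subsets of `Fin n` where each element is
included independently with probability `σ`, of the event `E`. -/
noncomputable def subsetPr (n : ℕ) (σ : ℝ) (E : Finset (Fin n) → Prop) : ℝ :=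
  ∑ I : Finset (Fin n), if E I then σ ^ I.card * (1 - σ) ^ (n - I.card) else 0

/-- The principal submatrix of `A` induced by the rows and columns indexed by `I`. -/
def principalSubmatrix {F : Type*} {n : ℕ} (A : Matrix (Fin n) (Fin n) F)
    (I : Finset (Fin n)) : Matrix I I F :=
  A.submatrix (fun i : I => (i : Fin n)) (fun j : I => (j : Fin n))

/-!
Write `σ = 1 - (1 - τ)²`, so that a `σ`-random set is the union `I₁ ∪ I₂` of two independent
`τ`-random sets, and let `R` be a set of `r = rank A` independent rows. By a Chernoff bound `I₁`
meets `R` in at least `τ r / 2` rows with high probability; then the rows `I₁` of `A` have rank at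
least `τ r / 2`, so some set `C` of that many columns is independent on the rows `I₁`. The block
`I₁ × (I₂ ∩ C)` of the principal submatrix on `I₁ ∪ I₂` has full column rank, and a second
Chernoff bound gives `|I₂ ∩ C| ≥ κ r` with high probability, for `κ = τ² / 20`.
-/

open Finset Matrix

section RandomSubset

variable {α : Type*}

noncomputable def subsetExpect (τ : ℝ) (s : Finset α) (f : Finset α → ℝ) : ℝ :=
  ∑ I ∈ s.powerset, τ ^ I.card * (1 - τ) ^ (s.card - I.card) * f I

open Classical in
noncomputable def subsetProb (τ : ℝ) (s : Finset α) (E : Finset α → Prop) : ℝ :=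
  subsetExpect τ s fun I => if E I then 1 else 0

variable {τ : ℝ} {s : Finset α}

@[simp]
lemma subsetExpect_empty (τ : ℝ) (f : Finset α → ℝ) : subsetExpect τ ∅ f = f ∅ := by
  simp [subsetExpect]

lemma subsetExpect_insert [DecidableEq α] {a : α} (ha : a ∉ s) (f : Finset α → ℝ) :
    subsetExpect τ (insert a s) f =
      (1 - τ) * subsetExpect τ s f + τ * subsetExpect τ s fun I => f (insert a I) := by
  rw [subsetExpect, sum_powerset_insert ha, subsetExpect, subsetExpect, mul_sum, mul_sum]
  congr 1 <;> refine sum_congr rfl fun I hI => ?_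
  · rw [card_insert_of_notMem ha, Nat.sub_add_comm (card_le_card (mem_powerset.1 hI)), pow_succ]
    ring
  · have haI : a ∉ I := fun h => ha (mem_powerset.1 hI h)
    rw [card_insert_of_notMem ha, card_insert_of_notMem haI, Nat.add_sub_add_right, pow_succ]
    ring

lemma subsetExpect_congr {f g : Finset α → ℝ} (h : ∀ I ⊆ s, f I = g I) :
    subsetExpect τ s f = subsetExpect τ s g :=
  sum_congr rfl fun I hI => by rw [h I (mem_powerset.1 hI)]

lemma subsetExpect_nonneg (hτ0 : 0 ≤ τ) (hτ1 : τ ≤ 1) {f : Finset α → ℝ} (h : ∀ I, 0 ≤ f I) :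
    0 ≤ subsetExpect τ s f :=
  sum_nonneg fun I _ => mul_nonneg
    (mul_nonneg (pow_nonneg hτ0 _) (pow_nonneg (sub_nonneg.2 hτ1) _)) (h I)

lemma subsetExpect_mono (hτ0 : 0 ≤ τ) (hτ1 : τ ≤ 1) {f g : Finset α → ℝ}
    (h : ∀ I, f I ≤ g I) : subsetExpect τ s f ≤ subsetExpect τ s g := by
  have := subsetExpect_nonneg (s := s) hτ0 hτ1 fun I => sub_nonneg.2 (h I)
  simp only [subsetExpect, mul_sub, sum_sub_distrib, sub_nonneg] at this
  exact this

@[simp]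
lemma subsetExpect_add (f g : Finset α → ℝ) :
    subsetExpect τ s (fun I => f I + g I) = subsetExpect τ s f + subsetExpect τ s g := by
  simp only [subsetExpect, mul_add, sum_add_distrib]

@[simp]
lemma subsetExpect_const_mul (c : ℝ) (f : Finset α → ℝ) :
    subsetExpect τ s (fun I => c * f I) = c * subsetExpect τ s f := by
  simp only [subsetExpect, mul_sum]
  exact sum_congr rfl fun I _ => by ring

@[simp]
lemma subsetExpect_const [DecidableEq α] (τ : ℝ) (s : Finset α) (c : ℝ) :
    subsetExpect τ s (fun _ => c) = c := by
  induction s using Finset.induction_on with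
  | empty => simp
  | insert a s ha ih => rw [subsetExpect_insert ha, ih]; ring

lemma subsetExpect_pow_card_inter [DecidableEq α] (τ x : ℝ) (s C : Finset α) :
    subsetExpect τ s (fun I => x ^ (I ∩ C).card) = (τ * x + (1 - τ)) ^ (s ∩ C).card := by
  induction s using Finset.induction_on with
  | empty => simp
  | insert a s ha ih =>
    rw [subsetExpect_insert ha, ih]
    by_cases haC : a ∈ C
    · have hinsert : ∀ I ⊆ s, x ^ (insert a I ∩ C).card = x * x ^ (I ∩ C).card := fun I hI => by
        rw [insert_inter_of_mem haC, card_insert_of_notMem fun h => ha (hI (mem_inter.1 h).1),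
          pow_succ, mul_comm]
      rw [subsetExpect_congr hinsert, subsetExpect_const_mul, ih, insert_inter_of_mem haC,
        card_insert_of_notMem fun h => ha (mem_inter.1 h).1, pow_succ]
      ring
    · simp only [insert_inter_of_notMem haC, ih]
      ring

lemma subsetExpect_union [DecidableEq α] (τ : ℝ) (s : Finset α) (f : Finset α → ℝ) :
    subsetExpect (1 - (1 - τ) ^ 2) s f =
      subsetExpect τ s fun I₁ => subsetExpect τ s fun I₂ => f (I₁ ∪ I₂) := by
  induction s using Finset.induction_on generalizing f with
  | empty => simp
  | insert a s ha ih =>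
    simp only [subsetExpect_insert ha, union_insert, insert_union, insert_idem, subsetExpect_add,
      subsetExpect_const_mul, ih]
    ring

lemma subsetProb_nonneg (hτ0 : 0 ≤ τ) (hτ1 : τ ≤ 1) (E : Finset α → Prop) :
    0 ≤ subsetProb τ s E :=
  subsetExpect_nonneg hτ0 hτ1 fun I => by split_ifs <;> norm_num

lemma subsetProb_mono (hτ0 : 0 ≤ τ) (hτ1 : τ ≤ 1) {E E' : Finset α → Prop}
    (h : ∀ I, E I → E' I) : subsetProb τ s E ≤ subsetProb τ s E' :=
  subsetExpect_mono hτ0 hτ1 fun I => by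
    by_cases hE : E I <;> simp [hE, h I, apply_ite (fun x : ℝ => 0 ≤ x)]

lemma subsetProb_add_subsetProb_not [DecidableEq α] (τ : ℝ) (s : Finset α)
    (E : Finset α → Prop) : subsetProb τ s E + subsetProb τ s (fun I => ¬ E I) = 1 := by
  rw [subsetProb, subsetProb, ← subsetExpect_add, ← subsetExpect_const τ s 1]
  exact subsetExpect_congr fun I _ => by by_cases hE : E I <;> simp [hE]

lemma subsetProb_card_inter_lt_le [DecidableEq α] (hτ0 : 0 ≤ τ) (hτ1 : τ ≤ 1) {C : Finset α}
    (hC : C ⊆ s) (a : ℝ) :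
    subsetProb τ s (fun I => ((I ∩ C).card : ℝ) < a) ≤ 2 ^ a * (1 - τ / 2) ^ C.card := by
  have markov : ∀ k : ℕ, (if (k : ℝ) < a then (1 : ℝ) else 0) ≤ 2 ^ a * (1 / 2) ^ k := by
    intro k
    split_ifs with hk
    · rw [one_div, inv_pow, ← Real.rpow_natCast, ← Real.rpow_neg zero_le_two,
        ← Real.rpow_add zero_lt_two]
      exact Real.one_le_rpow one_le_two (by linarith)
    · positivity
  calc subsetProb τ s (fun I => ((I ∩ C).card : ℝ) < a)
      ≤ subsetExpect τ s (fun I => 2 ^ a * (1 / 2) ^ (I ∩ C).card) :=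
        subsetExpect_mono hτ0 hτ1 fun I => markov _
    _ = 2 ^ a * (1 - τ / 2) ^ C.card := by
        rw [subsetExpect_const_mul, subsetExpect_pow_card_inter, inter_eq_right.2 hC]
        ring_nf

lemma subsetProb_card_inter_lt_le_exp [DecidableEq α] (hτ0 : 0 ≤ τ) (hτ1 : τ ≤ 1)
    {C : Finset α} (hC : C ⊆ s) {a : ℝ} (ha : a ≤ τ * C.card / 2) :
    subsetProb τ s (fun I => ((I ∩ C).card : ℝ) < a) ≤ Real.exp (-(3 / 20 * τ * C.card)) := by
  have hlog2 : 0 < Real.log 2 := Real.log_pos one_lt_two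
  have hlog2_lt : Real.log 2 < 0.7 := Real.log_two_lt_d9.trans (by norm_num)
  calc subsetProb τ s (fun I => ((I ∩ C).card : ℝ) < a)
      ≤ 2 ^ a * (1 - τ / 2) ^ C.card := subsetProb_card_inter_lt_le hτ0 hτ1 hC a
    _ ≤ Real.exp (Real.log 2 * a) * Real.exp (-(τ / 2)) ^ C.card := by
        rw [← Real.rpow_def_of_pos zero_lt_two]
        gcongr
        · linarith
        · linarith [Real.add_one_le_exp (-(τ / 2))]
    _ = Real.exp (Real.log 2 * a - τ / 2 * C.card) := by
        rw [← Real.exp_nat_mul, ← Real.exp_add]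
        ring_nf
    _ ≤ Real.exp (-(3 / 20 * τ * C.card)) := by
        -- `3 / 20 < (1 - log 2) / 2`
        gcongr
        nlinarith [mul_nonneg hτ0 (Nat.cast_nonneg (α := ℝ) C.card)]

lemma one_sub_exp_le_subsetProb_le_card_inter [DecidableEq α] (hτ0 : 0 ≤ τ) (hτ1 : τ ≤ 1)
    {C : Finset α} (hC : C ⊆ s) {a : ℝ} (ha : a ≤ τ * C.card / 2) :
    1 - Real.exp (-(3 / 20 * τ * C.card)) ≤
      subsetProb τ s (fun I => a ≤ ((I ∩ C).card : ℝ)) := by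
  have hsum := subsetProb_add_subsetProb_not τ s (fun I => ((I ∩ C).card : ℝ) < a)
  simp only [not_lt] at hsum
  linarith [subsetProb_card_inter_lt_le_exp hτ0 hτ1 hC ha]

lemma one_sub_two_mul_le_subsetProb_union [DecidableEq α] (hτ0 : 0 ≤ τ) (hτ1 : τ ≤ 1)
    {G E : Finset α → Prop} {x : ℝ} (hG : 1 - x ≤ subsetProb τ s G)
    (hE : ∀ I₁, G I₁ → 1 - x ≤ subsetProb τ s fun I₂ => E (I₁ ∪ I₂)) :
    1 - 2 * x ≤ subsetProb (1 - (1 - τ) ^ 2) s E := by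
  classical
  rcases le_or_gt x 1 with hx | hx
  · calc 1 - 2 * x ≤ (1 - x) * (1 - x) := by nlinarith [sq_nonneg x]
      _ ≤ (1 - x) * subsetProb τ s G := mul_le_mul_of_nonneg_left hG (by linarith)
      _ = subsetExpect τ s (fun I₁ => (1 - x) * if G I₁ then 1 else 0) :=
        (subsetExpect_const_mul _ _).symm
      _ ≤ subsetExpect τ s fun I₁ => subsetProb τ s fun I₂ => E (I₁ ∪ I₂) :=
        subsetExpect_mono hτ0 hτ1 fun I₁ => by
          split_ifs with h
          · simpa using hE I₁ h
          · simpa using subsetProb_nonneg hτ0 hτ1 _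
      _ = subsetProb (1 - (1 - τ) ^ 2) s E :=
        (subsetExpect_union τ s fun I => if E I then 1 else 0).symm
  · have : 0 ≤ subsetProb (1 - (1 - τ) ^ 2) s E :=
      subsetProb_nonneg (by nlinarith) (by nlinarith) E
    linarith

end RandomSubset

section Rank

variable {F : Type*} [Field F] {m n : Type*} [Fintype n]

theorem Matrix.exists_finset_card_eq_rank_linearIndependent_row [Finite m] (A : Matrix m n F) :
    ∃ R : Finset m, R.card = A.rank ∧ LinearIndependent F fun i : R => A i := by
  obtain ⟨b, -, -, hspan, hli⟩ :=
    exists_linearIndepOn_extension (linearIndepOn_empty F A.row) (Set.empty_subset Set.univ)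
  lift b to Finset m using b.toFinite
  refine ⟨b, ?_, hli⟩
  have hspan_eq : Submodule.span F (Set.range A.row) = Submodule.span F (A.row '' b) :=
    le_antisymm (Submodule.span_le.2 (Set.image_univ ▸ hspan))
      (Submodule.span_mono (Set.image_subset_range _ _))
  rw [A.rank_eq_finrank_span_row, hspan_eq, Set.image_eq_range, finrank_span_eq_card hli]
  simp

theorem Matrix.card_le_rank_of_linearIndependent_row {ι κ : Type*} [Fintype ι] [Fintype κ]
    (A : Matrix m n F) (r : ι → m) (c : κ → n) (h : LinearIndependent F (A.submatrix r c).row) :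
    Fintype.card ι ≤ A.rank :=
  h.rank_matrix.symm.le.trans (A.rank_submatrix_le r c)

end Rank

theorem exists_card_le_rank_principalSubmatrix_union {F : Type*} [Field F] {n : ℕ}
    (A : Matrix (Fin n) (Fin n) F) {R : Finset (Fin n)}
    (hR : LinearIndependent F fun i : R => A i) (I₁ : Finset (Fin n)) :
    ∃ C : Finset (Fin n), (I₁ ∩ R).card ≤ C.card ∧
      ∀ I₂, (I₂ ∩ C).card ≤ (principalSubmatrix A (I₁ ∪ I₂)).rank := by
  set B : Matrix I₁ (Fin n) F := A.submatrix (↑) id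
  obtain ⟨C, hC, hCli⟩ := Matrix.exists_finset_card_eq_rank_linearIndependent_row Bᵀ
  refine ⟨C, ?_, fun I₂ => ?_⟩
  · rw [hC, Matrix.rank_transpose, ← Fintype.card_coe]
    refine B.card_le_rank_of_linearIndependent_row
      (fun i : ↥(I₁ ∩ R) => ⟨i, (mem_inter.1 i.2).1⟩) id ?_
    exact hR.comp (Set.inclusion (coe_subset.2 inter_subset_right))
      (Set.inclusion_injective (coe_subset.2 inter_subset_right))
  · rw [← Fintype.card_coe, ← Matrix.rank_transpose]
    refine (principalSubmatrix A (I₁ ∪ I₂))ᵀ.card_le_rank_of_linearIndependent_row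
      (fun j : ↥(I₂ ∩ C) => ⟨j, mem_union_right _ (mem_inter.1 j.2).1⟩)
      (fun i : I₁ => ⟨i, mem_union_left _ i.2⟩) ?_
    exact hCli.comp (Set.inclusion (coe_subset.2 inter_subset_right))
      (Set.inclusion_injective (coe_subset.2 inter_subset_right))

theorem subsetPr_eq_subsetProb (n : ℕ) (σ : ℝ) (E : Finset (Fin n) → Prop) :
    subsetPr n σ E = subsetProb σ univ E := by
  simp [subsetPr, subsetProb, subsetExpect, powerset_univ]

theorem one_sub_two_mul_exp_le_subsetProb_rank_principalSubmatrix {τ : ℝ} (hτ0 : 0 < τ)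
    (hτ1 : τ ≤ 1) {F : Type*} [Field F] {n : ℕ} (A : Matrix (Fin n) (Fin n) F) :
    1 - 2 * Real.exp (-(τ ^ 2 / 20) * A.rank) ≤
      subsetProb (1 - (1 - τ) ^ 2) univ
        (fun I => τ ^ 2 / 20 * (A.rank : ℝ) ≤ (principalSubmatrix A I).rank) := by
  obtain ⟨R, hR, hRli⟩ := A.exists_finset_card_eq_rank_linearIndependent_row
  choose C hRC hC using exists_card_le_rank_principalSubmatrix_union A hRli
  set r : ℝ := (A.rank : ℝ)
  have tail : ∀ {D : Finset (Fin n)} {a : ℝ}, τ * r / 2 ≤ D.card → a ≤ τ * D.card / 2 →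
      1 - Real.exp (-(τ ^ 2 / 20) * r) ≤ subsetProb τ univ fun I => a ≤ (I ∩ D).card := by
    intro D a hD ha
    refine le_trans ?_ (one_sub_exp_le_subsetProb_le_card_inter hτ0.le hτ1 (subset_univ D) ha)
    gcongr
    nlinarith
  have hr0 : 0 ≤ r := Nat.cast_nonneg _
  refine one_sub_two_mul_le_subsetProb_union hτ0.le hτ1
    (G := fun I₁ => τ * r / 2 ≤ (I₁ ∩ R).card) ?_ fun I₁ hI₁ => ?_
  · exact tail (by rw [hR]; nlinarith) (by rw [hR])
  · have hCcard : τ * r / 2 ≤ (C I₁).card := hI₁.trans (mod_cast hRC I₁)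
    exact (tail hCcard (by nlinarith)).trans
      (subsetProb_mono hτ0.le hτ1 fun I₂ h => h.trans (mod_cast hC I₁ I₂))

/-- **Random restrictions of matrices** (Proposition 1.1):
for every `σ ∈ (0,1]` there exists `κ ∈ (0,1]` such that for every field `F` and every
matrix `A ∈ F^{n×n}`, a `σ`-random principal submatrix of `A` has rank at least
`κ·rank A` with probability at least `1 - 2·e^{-κ·rank A}`. -/
theorem random_restriction_matrix (σ : ℝ) (hσ0 : 0 < σ) (hσ1 : σ ≤ 1) :
    ∃ κ : ℝ, 0 < κ ∧ κ ≤ 1 ∧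
      ∀ (F : Type) [Field F] (n : ℕ) (A : Matrix (Fin n) (Fin n) F),
        1 - 2 * Real.exp (-κ * A.rank) ≤
          subsetPr n σ
            (fun I => κ * (A.rank : ℝ) ≤ ((principalSubmatrix A I).rank : ℝ)) := by
  obtain ⟨τ, hτ0, hτ1, rfl⟩ : ∃ τ : ℝ, 0 < τ ∧ τ ≤ 1 ∧ σ = 1 - (1 - τ) ^ 2 := by
    refine ⟨1 - √(1 - σ), ?_, ?_, ?_⟩
    · linarith [(Real.sqrt_lt' one_pos).2 (show 1 - σ < 1 ^ 2 by linarith)]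
    · linarith [Real.sqrt_nonneg (1 - σ)]
    · rw [sub_sub_cancel, Real.sq_sqrt (by linarith)]
      ring
  refine ⟨τ ^ 2 / 20, by positivity, by nlinarith, fun F _ n A => ?_⟩
  rw [subsetPr_eq_subsetProb]
  exact one_sub_two_mul_exp_le_subsetProb_rank_principalSubmatrix hτ0 hτ1 A
end

section
/- For every σ ∈ [0,1], every n ∈ ℕ, every subset A ⊆ {0,1}^n, and every real k ≥ 0: π_σ^n(A)² · Pr_{x~π_σ^n}[h₂(x;A) ≥ k] ≤ 2^{−k}, where π_σ^n(A) is the probability of A under π_σ^n. -/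
/-- The weight of a point `x ∈ {0,1}^n` under the product distribution `π_σ^n`. -/
noncomputable def cubeWeight (n : ℕ) (σ : ℝ) (x : Fin n → Bool) : ℝ :=
  ∏ i, if x i then σ else 1 - σ

open Classical in
/-- The probability of the event `E` under the product distribution `π_σ^n` on `{0,1}^n`,
where each coordinate is independently `1` with probability `σ`. -/
noncomputable def cubePr (n : ℕ) (σ : ℝ) (E : (Fin n → Bool) → Prop) : ℝ :=
  ∑ x : Fin n → Bool, if E x then cubeWeight n σ x else 0

/-- The two-point distance `h₂(x; A)`, valued in `ENNReal` (so `h₂(x; ∅) = +∞`):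
the minimum over `y, z ∈ A` of the number of coordinates of `x` differing both
from `y` and from `z`. -/
noncomputable def h2 {n : ℕ} (x : Fin n → Bool) (A : Set (Fin n → Bool)) : ENNReal :=
  ⨅ (y ∈ A) (z ∈ A),
    (((Finset.univ.filter fun i : Fin n => x i ≠ y i ∧ x i ≠ z i).card : ℕ) : ENNReal)

/-!
The inequality is proved in the two-set form `π(A) π(B) E[2^{h₂(x;A,B)}] ≤ 1`, where
`h₂(x;A,B)` minimises over `y ∈ A`, `z ∈ B`; Markov's inequality then gives the tail bound.

The two-set form goes by induction on `n`, splitting off the first coordinate `e`. Writing `Aₑ`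
for the sections and `πA` for the projection of `A`, `h₂(e·x; A, B)` is at most each of
`h₂(x; Aₑ, πB)`, `h₂(x; πA, Bₑ)` and `1 + h₂(x; πA, πB)`. The induction hypothesis for these
three pairs bounds `E[2^{h₂(e·x;A,B)}]` three ways, and after normalising by `π(πA) π(πB)` the
step becomes the scalar inequality `((1-p)s₀ + ps₁)² ((1-p)/s₀ + p/s₁) ≤ 1` for
`s₀, s₁ ∈ [1/2, 1]`.
-/

open Finset

def bernoulliMean (p : ℝ) (f : Bool → ℝ) : ℝ :=
  (1 - p) * f false + p * f true

section Bernoulli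

variable {p : ℝ}

theorem convexComb_sq_mul_le_of_le (hp0 : 0 ≤ p) (hp1 : p ≤ 1) {a b : ℝ} (ha : 1 / 2 ≤ a)
    (hab : a ≤ b) (hb : b ≤ 1) :
    ((1 - p) * a + p * b) ^ 2 * ((1 - p) * b + p * a) ≤ a * b := by
  set M := (1 - p) * a + p * b
  have hM : 0 ≤ M := by nlinarith
  have hMb : M ≤ b := by nlinarith
  have hpM : M * p * (b - a) ≤ a * b := by nlinarith [mul_le_mul hMb hp1 hp0 (by linarith)]
  have hab0 : 0 ≤ a * b := by nlinarith
  -- `MN = ab + p(1-p)(b-a)²` for the second factor `N`, so `ab - M²N` is the sum of the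
  -- nonnegative terms `(1-p)(1-a)(ab - Mp(b-a))`, `abp(1-b)` and `Mp(1-p)(b-a)(1-b)`
  nlinarith [mul_nonneg (mul_nonneg (sub_nonneg.2 hp1) (by linarith : (0:ℝ) ≤ 1 - a))
      (sub_nonneg.2 hpM), mul_nonneg (mul_nonneg hab0 hp0) (sub_nonneg.2 hb),
    mul_nonneg (mul_nonneg (mul_nonneg (mul_nonneg hM hp0) (sub_nonneg.2 hp1))
      (sub_nonneg.2 hab)) (sub_nonneg.2 hb)]

theorem convexComb_sq_mul_le (hp0 : 0 ≤ p) (hp1 : p ≤ 1) {a b : ℝ} (ha : 1 / 2 ≤ a)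
    (ha1 : a ≤ 1) (hb : 1 / 2 ≤ b) (hb1 : b ≤ 1) :
    ((1 - p) * a + p * b) ^ 2 * ((1 - p) * b + p * a) ≤ a * b := by
  rcases le_total a b with hab | hba
  · exact convexComb_sq_mul_le_of_le hp0 hp1 ha hab hb1
  · have := convexComb_sq_mul_le_of_le (p := 1 - p) (by linarith) (by linarith) hb hba ha1
    calc _ = ((1 - (1 - p)) * b + (1 - p) * a) ^ 2 * ((1 - (1 - p)) * a + (1 - p) * b) := by
          ring
      _ ≤ b * a := this
      _ = a * b := mul_comm b a

theorem bernoulliMean_sq_mul_le_one (hp0 : 0 ≤ p) (hp1 : p ≤ 1) {s t : Bool → ℝ}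
    (hs : ∀ e, 1 / 2 ≤ s e) (hs1 : ∀ e, s e ≤ 1) (hst : ∀ e, s e * t e ≤ 1) :
    bernoulliMean p s ^ 2 * bernoulliMean p t ≤ 1 := by
  have hs0 : 0 < s false * s true := mul_pos (by linarith [hs false]) (by linarith [hs true])
  have ht : bernoulliMean p t * (s false * s true) ≤ (1 - p) * s true + p * s false := by
    unfold bernoulliMean
    nlinarith [mul_le_mul_of_nonneg_right (mul_le_mul_of_nonneg_left (hst false)
      (sub_nonneg.2 hp1)) (by linarith [hs true] : (0:ℝ) ≤ s true),
      mul_le_mul_of_nonneg_right (mul_le_mul_of_nonneg_left (hst true) hp0)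
      (by linarith [hs false] : (0:ℝ) ≤ s false)]
  refine le_of_mul_le_mul_right ?_ hs0
  calc _ = bernoulliMean p s ^ 2 * (bernoulliMean p t * (s false * s true)) := by ring
    _ ≤ bernoulliMean p s ^ 2 * ((1 - p) * s true + p * s false) := by gcongr
    _ ≤ s false * s true :=
      convexComb_sq_mul_le hp0 hp1 (hs false) (hs1 false) (hs true) (hs1 true)
    _ = 1 * (s false * s true) := (one_mul _).symm

theorem bernoulliMean_nonneg (hp0 : 0 ≤ p) (hp1 : p ≤ 1) {f : Bool → ℝ}
    (hf : ∀ e, 0 ≤ f e) :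
    0 ≤ bernoulliMean p f :=
  add_nonneg (mul_nonneg (sub_nonneg.2 hp1) (hf false)) (mul_nonneg hp0 (hf true))

theorem bernoulliMean_mono (hp0 : 0 ≤ p) (hp1 : p ≤ 1) {f g : Bool → ℝ}
    (hfg : ∀ e, f e ≤ g e) :
    bernoulliMean p f ≤ bernoulliMean p g :=
  add_le_add (mul_le_mul_of_nonneg_left (hfg false) (sub_nonneg.2 hp1))
    (mul_le_mul_of_nonneg_left (hfg true) hp0)

theorem bernoulliMean_mul_mul_le_one (hp0 : 0 ≤ p) (hp1 : p ≤ 1) {u v t : Bool → ℝ}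
    (hu0 : ∀ e, 0 ≤ u e) (hu1 : ∀ e, u e ≤ 1) (hv0 : ∀ e, 0 ≤ v e)
    (hv1 : ∀ e, v e ≤ 1) (ht0 : ∀ e, 0 ≤ t e) (ht2 : ∀ e, t e ≤ 2)
    (hut : ∀ e, u e * t e ≤ 1) (hvt : ∀ e, v e * t e ≤ 1) :
    bernoulliMean p u * bernoulliMean p v * bernoulliMean p t ≤ 1 := by
  -- raising `u` and `v` to `s` only increases the left side, and `t ≤ 2` keeps `s * t ≤ 1`
  set s : Bool → ℝ := fun e => max (max (u e) (v e)) (1 / 2)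
  have hs : ∀ e, 1 / 2 ≤ s e ∧ s e ≤ 1 := fun e =>
    ⟨le_max_right _ _, max_le (max_le (hu1 e) (hv1 e)) (by norm_num)⟩
  have hst : ∀ e, s e * t e ≤ 1 := fun e => by
    simp only [s, max_mul_of_nonneg _ _ (ht0 e)]
    exact max_le (max_le (hut e) (hvt e)) (by linarith [ht2 e])
  have hus : bernoulliMean p u ≤ bernoulliMean p s :=
    bernoulliMean_mono hp0 hp1 fun e => (le_max_left _ _).trans (le_max_left _ _)
  have hvs : bernoulliMean p v ≤ bernoulliMean p s :=
    bernoulliMean_mono hp0 hp1 fun e => (le_max_right _ _).trans (le_max_left _ _)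
  calc _ ≤ bernoulliMean p s ^ 2 * bernoulliMean p t := by
        rw [sq]
        gcongr
        · exact bernoulliMean_nonneg hp0 hp1 ht0
        · exact bernoulliMean_nonneg hp0 hp1 hv0
        · exact (bernoulliMean_nonneg hp0 hp1 hu0).trans hus
    _ ≤ 1 := bernoulliMean_sq_mul_le_one hp0 hp1 (fun e => (hs e).1) (fun e => (hs e).2) hst

theorem bernoulliMean_mul_mul_le_one_of_le (hp0 : 0 ≤ p) (hp1 : p ≤ 1) {a b T : Bool → ℝ}
    {α β : ℝ}
    (ha0 : ∀ e, 0 ≤ a e) (haα : ∀ e, a e ≤ α) (hb0 : ∀ e, 0 ≤ b e) (hbβ : ∀ e, b e ≤ β)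
    (hT0 : ∀ e, 0 ≤ T e) (hsecA : ∀ e, a e * β * T e ≤ 1)
    (hsecB : ∀ e, α * b e * T e ≤ 1) (hproj : ∀ e, α * β * T e ≤ 2) :
    bernoulliMean p a * bernoulliMean p b * bernoulliMean p T ≤ 1 := by
  rcases ((ha0 false).trans (haα false)).eq_or_lt with rfl | hα
  · have ha : ∀ e, a e = 0 := fun e => le_antisymm (haα e) (ha0 e)
    simp [bernoulliMean, ha]
  rcases ((hb0 false).trans (hbβ false)).eq_or_lt with rfl | hβ
  · have hb : ∀ e, b e = 0 := fun e => le_antisymm (hbβ e) (hb0 e)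
    simp [bernoulliMean, hb]
  have key := bernoulliMean_mul_mul_le_one hp0 hp1 (u := fun e => a e / α)
    (v := fun e => b e / β) (t := fun e => α * β * T e)
    (fun e => div_nonneg (ha0 e) hα.le) (fun e => (div_le_one hα).2 (haα e))
    (fun e => div_nonneg (hb0 e) hβ.le) (fun e => (div_le_one hβ).2 (hbβ e))
    (fun e => mul_nonneg (by positivity) (hT0 e)) hproj
    (fun e => by convert hsecA e using 1; field_simp)
    (fun e => by convert hsecB e using 1; field_simp)
  convert key using 1
  simp only [bernoulliMean]
  field_simp

end Bernoulli

noncomputable def cubeExp (n : ℕ) (σ : ℝ) (f : (Fin n → Bool) → ℝ) : ℝ :=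
  ∑ x, cubeWeight n σ x * f x

section Cube

variable {n : ℕ} {σ : ℝ}

theorem cubeWeight_nonneg (hσ0 : 0 ≤ σ) (hσ1 : σ ≤ 1) (x : Fin n → Bool) :
    0 ≤ cubeWeight n σ x :=
  prod_nonneg fun i _ => by split <;> linarith

theorem cubeWeight_cons (e : Bool) (x : Fin n → Bool) :
    cubeWeight (n + 1) σ (Fin.cons e x) = (if e then σ else 1 - σ) * cubeWeight n σ x := by
  simp [cubeWeight, Fin.prod_univ_succ]

theorem cubeExp_succ (f : (Fin (n + 1) → Bool) → ℝ) :
    cubeExp (n + 1) σ f = bernoulliMean σ fun e => cubeExp n σ fun x => f (Fin.cons e x) := by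
  rw [cubeExp, ← (Fin.consEquiv fun _ => Bool).sum_comp, Fintype.sum_prod_type, Fintype.sum_bool]
  simp only [Fin.consEquiv, Equiv.coe_fn_mk, cubeWeight_cons, mul_assoc, ← mul_sum, bernoulliMean,
    cubeExp]
  simp only [if_true, Bool.false_eq_true, if_false]
  ring

theorem cubeExp_nonneg (hσ0 : 0 ≤ σ) (hσ1 : σ ≤ 1) {f : (Fin n → Bool) → ℝ}
    (hf : ∀ x, 0 ≤ f x) : 0 ≤ cubeExp n σ f :=
  sum_nonneg fun x _ => mul_nonneg (cubeWeight_nonneg hσ0 hσ1 x) (hf x)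

theorem cubeExp_mono (hσ0 : 0 ≤ σ) (hσ1 : σ ≤ 1) {f g : (Fin n → Bool) → ℝ}
    (hfg : ∀ x, f x ≤ g x) : cubeExp n σ f ≤ cubeExp n σ g :=
  sum_le_sum fun x _ => mul_le_mul_of_nonneg_left (hfg x) (cubeWeight_nonneg hσ0 hσ1 x)

theorem cubeExp_const_mul (c : ℝ) (f : (Fin n → Bool) → ℝ) :
    cubeExp n σ (fun x => c * f x) = c * cubeExp n σ f := by
  simp only [cubeExp, mul_sum]
  exact sum_congr rfl fun x _ => by ring

open Classical in
theorem cubePr_eq_cubeExp (E : (Fin n → Bool) → Prop) :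
    cubePr n σ E = cubeExp n σ fun x => if E x then 1 else 0 := by
  simp [cubePr, cubeExp]

theorem cubePr_nonneg (hσ0 : 0 ≤ σ) (hσ1 : σ ≤ 1) (E : (Fin n → Bool) → Prop) :
    0 ≤ cubePr n σ E := by
  rw [cubePr_eq_cubeExp]
  exact cubeExp_nonneg hσ0 hσ1 fun x => by split <;> norm_num

theorem cubePr_mono (hσ0 : 0 ≤ σ) (hσ1 : σ ≤ 1) {A B : Set (Fin n → Bool)}
    (hAB : A ⊆ B) :
    cubePr n σ (· ∈ A) ≤ cubePr n σ (· ∈ B) := by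
  simp only [cubePr_eq_cubeExp]
  refine cubeExp_mono hσ0 hσ1 fun x => ?_
  by_cases hx : x ∈ A
  · simp [hx, hAB hx]
  · simp only [hx, if_false]
    split <;> norm_num

theorem cubePr_empty : cubePr n σ (· ∈ (∅ : Set (Fin n → Bool))) = 0 := by
  simp [cubePr]

theorem cubePr_succ (A : Set (Fin (n + 1) → Bool)) :
    cubePr (n + 1) σ (· ∈ A) =
      bernoulliMean σ fun e => cubePr n σ (· ∈ Fin.cons e ⁻¹' A) := by
  simp only [cubePr_eq_cubeExp, cubeExp_succ, Set.mem_preimage]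

theorem cubePr_le_cubeExp (hσ0 : 0 ≤ σ) (hσ1 : σ ≤ 1) {E : (Fin n → Bool) → Prop}
    {f : (Fin n → Bool) → ℝ} (hf0 : ∀ x, 0 ≤ f x) (hf1 : ∀ x, E x → 1 ≤ f x) :
    cubePr n σ E ≤ cubeExp n σ f := by
  classical
  rw [cubePr_eq_cubeExp]
  refine cubeExp_mono hσ0 hσ1 fun x => ?_
  split
  · exact hf1 x ‹_›
  · exact hf0 x

end Cube

def twoPointCount {n : ℕ} (x y z : Fin n → Bool) : ℕ :=
  (univ.filter fun i => x i ≠ y i ∧ x i ≠ z i).card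

/-- `h₂(x; A, B)`; it takes the junk value `0` when `A` or `B` is empty. -/
noncomputable def twoPointDist {n : ℕ} (x : Fin n → Bool) (A B : Set (Fin n → Bool)) : ℕ :=
  sInf {k | ∃ y ∈ A, ∃ z ∈ B, twoPointCount x y z = k}

section TwoPointDist

variable {n : ℕ}

theorem twoPointCount_cons (e c d : Bool) (x y z : Fin n → Bool) :
    twoPointCount (Fin.cons e x) (Fin.cons c y) (Fin.cons d z)
      = (if e ≠ c ∧ e ≠ d then 1 else 0) + twoPointCount x y z := by
  simp only [twoPointCount, card_filter, Fin.sum_univ_succ, Fin.cons_zero, Fin.cons_succ]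

theorem twoPointCount_of_fin_zero (x y z : Fin 0 → Bool) : twoPointCount x y z = 0 := by
  simp [twoPointCount]

theorem twoPointDist_le {x y z : Fin n → Bool} {A B : Set (Fin n → Bool)} (hy : y ∈ A)
    (hz : z ∈ B) : twoPointDist x A B ≤ twoPointCount x y z :=
  Nat.sInf_le ⟨y, hy, z, hz, rfl⟩

theorem exists_twoPointCount_eq_twoPointDist (x : Fin n → Bool) {A B : Set (Fin n → Bool)}
    (hA : A.Nonempty) (hB : B.Nonempty) :
    ∃ y ∈ A, ∃ z ∈ B, twoPointCount x y z = twoPointDist x A B := by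
  obtain ⟨y, hy⟩ := hA
  obtain ⟨z, hz⟩ := hB
  exact Nat.sInf_mem (s := {k | ∃ y ∈ A, ∃ z ∈ B, twoPointCount x y z = k})
    ⟨_, y, hy, z, hz, rfl⟩

theorem twoPointDist_of_fin_zero (x : Fin 0 → Bool) (A B : Set (Fin 0 → Bool)) :
    twoPointDist x A B = 0 := by
  refine Nat.sInf_eq_zero.2 ?_
  rcases Set.eq_empty_or_nonempty {k | ∃ y ∈ A, ∃ z ∈ B, twoPointCount x y z = k} with h | h
  · exact .inr h
  · obtain ⟨_, y, hy, z, hz, rfl⟩ := h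
    exact .inl ⟨y, hy, z, hz, twoPointCount_of_fin_zero x y z⟩

theorem h2_le_twoPointDist (x : Fin n → Bool) {A : Set (Fin n → Bool)} (hA : A.Nonempty) :
    h2 x A ≤ twoPointDist x A A := by
  obtain ⟨y, hy, z, hz, hyz⟩ := exists_twoPointCount_eq_twoPointDist x hA hA
  rw [← hyz]
  exact iInf₂_le_of_le y hy (iInf₂_le z hz)

theorem twoPointDist_cons_le {A B : Set (Fin (n + 1) → Bool)} {C D : Set (Fin n → Bool)}
    {e : Bool} {κ : ℕ} (hC : C.Nonempty) (hD : D.Nonempty)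
    (hlift : ∀ y ∈ C, ∀ z ∈ D, ∃ c d, Fin.cons c y ∈ A ∧ Fin.cons d z ∈ B ∧
      (if e ≠ c ∧ e ≠ d then 1 else 0) ≤ κ) (x : Fin n → Bool) :
    twoPointDist (Fin.cons e x) A B ≤ κ + twoPointDist x C D := by
  obtain ⟨y, hy, z, hz, hyz⟩ := exists_twoPointCount_eq_twoPointDist x hC hD
  obtain ⟨c, d, hc, hd, hκ⟩ := hlift y hy z hz
  calc twoPointDist (Fin.cons e x) A B
      ≤ twoPointCount (Fin.cons e x) (Fin.cons c y) (Fin.cons d z) := twoPointDist_le hc hd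
    _ = (if e ≠ c ∧ e ≠ d then 1 else 0) + twoPointDist x C D := by
      rw [twoPointCount_cons, hyz]
    _ ≤ κ + twoPointDist x C D := by gcongr

theorem Fin.cons_preimage_subset_tail_image {α : Type*} (e : α) (A : Set (Fin (n + 1) → α)) :
    Fin.cons e ⁻¹' A ⊆ Fin.tail '' A :=
  fun _ hy => ⟨_, hy, Fin.tail_cons _ _⟩

theorem Fin.exists_cons_mem_of_mem_tail_image {α : Type*} {A : Set (Fin (n + 1) → α)}
    {y : Fin n → α} (hy : y ∈ Fin.tail '' A) : ∃ c, Fin.cons c y ∈ A := by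
  obtain ⟨x, hx, rfl⟩ := hy
  exact ⟨x 0, by rwa [Fin.cons_self_tail]⟩

end TwoPointDist

section Induction

variable {σ : ℝ}

theorem cubePr_mul_cubePr_mul_cubeExp_cons_le (hσ0 : 0 ≤ σ) (hσ1 : σ ≤ 1) {n : ℕ}
    (ih : ∀ C D : Set (Fin n → Bool), cubePr n σ (· ∈ C) * cubePr n σ (· ∈ D) *
      cubeExp n σ (fun x => 2 ^ twoPointDist x C D) ≤ 1)
    {A B : Set (Fin (n + 1) → Bool)} (e : Bool) (C D : Set (Fin n → Bool)) (κ : ℕ)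
    (hlift : ∀ y ∈ C, ∀ z ∈ D, ∃ c d, Fin.cons c y ∈ A ∧ Fin.cons d z ∈ B ∧
      (if e ≠ c ∧ e ≠ d then 1 else 0) ≤ κ) :
    cubePr n σ (· ∈ C) * cubePr n σ (· ∈ D) *
      cubeExp n σ (fun x => 2 ^ twoPointDist (Fin.cons e x) A B) ≤ 2 ^ κ := by
  rcases C.eq_empty_or_nonempty with rfl | hC
  · rw [cubePr_empty, zero_mul, zero_mul]
    positivity
  rcases D.eq_empty_or_nonempty with rfl | hD
  · rw [cubePr_empty, mul_zero, zero_mul]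
    positivity
  have hpoint (x : Fin n → Bool) :
      (2 : ℝ) ^ twoPointDist (Fin.cons e x) A B ≤ 2 ^ κ * 2 ^ twoPointDist x C D := by
    rw [← pow_add]
    exact pow_le_pow_right₀ one_le_two (twoPointDist_cons_le hC hD hlift x)
  have hCD := mul_nonneg (cubePr_nonneg hσ0 hσ1 (· ∈ C)) (cubePr_nonneg hσ0 hσ1 (· ∈ D))
  calc _ ≤ cubePr n σ (· ∈ C) * cubePr n σ (· ∈ D) *
        cubeExp n σ (fun x => 2 ^ κ * 2 ^ twoPointDist x C D) := by
        gcongr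
        exact cubeExp_mono hσ0 hσ1 hpoint
    _ = 2 ^ κ * (cubePr n σ (· ∈ C) * cubePr n σ (· ∈ D) *
        cubeExp n σ (fun x => 2 ^ twoPointDist x C D)) := by
        rw [cubeExp_const_mul]; ring
    _ ≤ 2 ^ κ := mul_le_of_le_one_right (by positivity) (ih C D)

theorem cubePr_mul_cubePr_mul_cubeExp_le_one (hσ0 : 0 ≤ σ) (hσ1 : σ ≤ 1) :
    ∀ (n : ℕ) (A B : Set (Fin n → Bool)), cubePr n σ (· ∈ A) * cubePr n σ (· ∈ B) *
      cubeExp n σ (fun x => 2 ^ twoPointDist x A B) ≤ 1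
  | 0, A, B => by
    simp only [cubePr, cubeExp, cubeWeight, twoPointDist_of_fin_zero, univ_unique,
      sum_singleton, prod_empty, Finset.univ_eq_empty]
    split_ifs <;> norm_num
  | n + 1, A, B => by
    have ih := cubePr_mul_cubePr_mul_cubeExp_le_one hσ0 hσ1 n
    rw [cubePr_succ A, cubePr_succ B, cubeExp_succ]
    refine bernoulliMean_mul_mul_le_one_of_le hσ0 hσ1 (fun e => cubePr_nonneg hσ0 hσ1 _)
      (fun e => cubePr_mono hσ0 hσ1 (Fin.cons_preimage_subset_tail_image e A))
      (fun e => cubePr_nonneg hσ0 hσ1 _)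
      (fun e => cubePr_mono hσ0 hσ1 (Fin.cons_preimage_subset_tail_image e B))
      (fun e => cubeExp_nonneg hσ0 hσ1 fun x => by positivity) (fun e => ?_) (fun e => ?_)
      (fun e => ?_)
    · refine (cubePr_mul_cubePr_mul_cubeExp_cons_le hσ0 hσ1 ih e _ _ 0 ?_).trans_eq (pow_zero _)
      intro y hy z hz
      obtain ⟨d, hd⟩ := Fin.exists_cons_mem_of_mem_tail_image hz
      exact ⟨e, d, hy, hd, by simp⟩
    · refine (cubePr_mul_cubePr_mul_cubeExp_cons_le hσ0 hσ1 ih e _ _ 0 ?_).trans_eq (pow_zero _)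
      intro y hy z hz
      obtain ⟨c, hc⟩ := Fin.exists_cons_mem_of_mem_tail_image hy
      exact ⟨c, e, hc, hz, by simp⟩
    · refine (cubePr_mul_cubePr_mul_cubeExp_cons_le hσ0 hσ1 ih e _ _ 1 ?_).trans_eq (pow_one _)
      intro y hy z hz
      obtain ⟨c, hc⟩ := Fin.exists_cons_mem_of_mem_tail_image hy
      obtain ⟨d, hd⟩ := Fin.exists_cons_mem_of_mem_tail_image hz
      exact ⟨c, d, hc, hd, by split <;> norm_num⟩

end Induction

theorem one_le_two_rpow_neg_mul_two_pow {k : ℝ} {m : ℕ} (hkm : k ≤ m) :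
    1 ≤ (2 : ℝ) ^ (-k) * 2 ^ m := by
  rw [← Real.rpow_natCast, ← Real.rpow_add two_pos]
  exact Real.one_le_rpow one_le_two (by linarith)

theorem talagrand_two_point_general (σ : ℝ) (hσ0 : 0 ≤ σ) (hσ1 : σ ≤ 1) (n : ℕ)
    (A : Set (Fin n → Bool)) (k : ℝ) :
    (cubePr n σ (fun x => x ∈ A)) ^ 2 *
        cubePr n σ (fun x => ENNReal.ofReal k ≤ h2 x A) ≤
      (2 : ℝ) ^ (-k) := by
  rcases A.eq_empty_or_nonempty with rfl | hA
  · rw [cubePr_empty, zero_pow two_ne_zero, zero_mul]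
    positivity
  have hmarkov : cubePr n σ (fun x => ENNReal.ofReal k ≤ h2 x A) ≤
      cubeExp n σ (fun x => 2 ^ (-k) * 2 ^ twoPointDist x A A) := by
    refine cubePr_le_cubeExp hσ0 hσ1 (fun x => by positivity) fun x hx => ?_
    refine one_le_two_rpow_neg_mul_two_pow ?_
    have := hx.trans (h2_le_twoPointDist x hA)
    rwa [ENNReal.ofReal_le_iff_le_toReal (ENNReal.natCast_ne_top _), ENNReal.toReal_natCast] at this
  calc _ ≤ cubePr n σ (· ∈ A) ^ 2 *
        cubeExp n σ (fun x => 2 ^ (-k) * 2 ^ twoPointDist x A A) := by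
        gcongr
    _ = 2 ^ (-k) * (cubePr n σ (· ∈ A) * cubePr n σ (· ∈ A) *
        cubeExp n σ (fun x => 2 ^ twoPointDist x A A)) := by
        rw [cubeExp_const_mul]; ring
    _ ≤ 2 ^ (-k) := mul_le_of_le_one_right (by positivity)
        (cubePr_mul_cubePr_mul_cubeExp_le_one hσ0 hσ1 n A A)

/-- **Talagrand's inequality** (Theorem 2.3): for every `σ ∈ [0,1]`, `A ⊆ {0,1}^n` and real
`k ≥ 0`, we have `π_σ^n(A)² · Pr_{x∼π_σ^n}[h₂(x;A) ≥ k] ≤ 2^{-k}`. -/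
theorem talagrand_two_point (σ : ℝ) (hσ0 : 0 ≤ σ) (hσ1 : σ ≤ 1) (n : ℕ)
    (A : Set (Fin n → Bool)) (k : ℝ) (hk : 0 ≤ k) :
    (cubePr n σ (fun x => x ∈ A)) ^ 2 *
        cubePr n σ (fun x => ENNReal.ofReal k ≤ h2 x A) ≤
      (2 : ℝ) ^ (-k) :=
  talagrand_two_point_general σ hσ0 hσ1 n A k
end

section
/- Let f : {0,1}^n → ℝ₊ be a sub-additive function with f(1,…,1) = r, and let k ≥ 1 be an integer. Then Pr_{x~π_{1/k}^n}[f(x) ≥ r/k] ≥ 1/k. -/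
/-- `f` is monotone w.r.t. the partial order on `{0,1}^n` given by inclusion of supports. -/
def CubeMonotone {n : ℕ} (f : (Fin n → Bool) → ℝ) : Prop :=
  ∀ x y : Fin n → Bool, (∀ i, x i = true → y i = true) → f x ≤ f y

/-- `f` is sub-additive: `f(x+y) ≤ f(x) + f(y)` whenever `x, y` have disjoint supports. -/
def CubeSubadditive {n : ℕ} (f : (Fin n → Bool) → ℝ) : Prop :=
  ∀ x y : Fin n → Bool, (∀ i, ¬(x i = true ∧ y i = true)) →
    f (fun i => x i || y i) ≤ f x + f y

/-- `f` is 1-Lipschitz w.r.t. the Hamming distance on `{0,1}^n`. -/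
def CubeLipschitz {n : ℕ} (f : (Fin n → Bool) → ℝ) : Prop :=
  ∀ x y : Fin n → Bool,
    |f x - f y| ≤ ((Finset.univ.filter fun i : Fin n => x i ≠ y i).card : ℝ)

open Finset Classical

theorem card_le_sum_card_filter_of_cover {α ι : Type*} [Fintype α] [Fintype ι]
    (P : ι → α → Prop) (hP : ∀ a, ∃ i, P i a) :
    Fintype.card α ≤ ∑ i, #{a | P i a} := by
  calc Fintype.card α = #(univ.biUnion fun i => ({a | P i a} : Finset α)) := by
        rw [← card_univ]
        congr 1
        ext a
        simpa using hP a
    _ ≤ ∑ i, #{a | P i a} := card_biUnion_le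

section Coloring

variable {n k : ℕ}

def colorClass (c : Fin n → Fin k) (j : Fin k) : Fin n → Bool := fun i => decide (c i = j)

theorem card_colorClass_eq (j : Fin k) (x : Fin n → Bool) :
    #{c : Fin n → Fin k | colorClass c j = x} = ∏ i, if x i then 1 else k - 1 := by
  have hfiber : ({c | colorClass c j = x} : Finset (Fin n → Fin k))
      = Fintype.piFinset fun i => if x i then {j} else {j}ᶜ := by
    ext c
    simp only [mem_filter, mem_univ, true_and, Fintype.mem_piFinset, funext_iff, colorClass]
    refine forall_congr' fun i => ?_
    cases x i <;> simp
  rw [hfiber, Fintype.card_piFinset]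
  refine prod_congr rfl fun i _ => ?_
  cases x i <;> simp [card_compl]

theorem pow_mul_cubeWeight_inv (hk : k ≠ 0) (x : Fin n → Bool) :
    (k : ℝ) ^ n * cubeWeight n (1 / k) x = ∏ i, if x i then (1 : ℝ) else k - 1 := by
  rw [cubeWeight, ← Fin.prod_const n (k : ℝ), ← prod_mul_distrib]
  refine prod_congr rfl fun i _ => ?_
  cases x i <;> simp <;> field_simp

/-- The colour class of a uniformly random `k`-colouring is distributed as `π_{1/k}^n`. -/
theorem pow_mul_cubePr_inv (j : Fin k) (E : (Fin n → Bool) → Prop) :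
    (k : ℝ) ^ n * cubePr n (1 / k) E = #{c : Fin n → Fin k | E (colorClass c j)} := by
  have hk : k ≠ 0 := j.pos.ne'
  have hfiber (x : Fin n → Bool) :
      #{c ∈ ({c | E (colorClass c j)} : Finset (Fin n → Fin k)) | colorClass c j = x}
        = if E x then #{c : Fin n → Fin k | colorClass c j = x} else 0 := by
    rw [filter_filter]
    split_ifs with hE
    · congr 1
      exact filter_congr fun c _ => ⟨And.right, fun h => ⟨h ▸ hE, h⟩⟩
    · exact card_eq_zero.2 (filter_eq_empty_iff.2 fun c _ h => hE (h.2 ▸ h.1))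
  rw [card_eq_sum_card_fiberwise (t := univ) (f := fun c => colorClass c j)
    fun _ _ => mem_univ _, cubePr, mul_sum, Nat.cast_sum]
  refine sum_congr rfl fun x _ => ?_
  rw [hfiber, mul_ite, mul_zero, pow_mul_cubeWeight_inv hk]
  split_ifs
  · rw [card_colorClass_eq]
    push_cast
    refine prod_congr rfl fun i _ => ?_
    cases x i <;> simp [Nat.cast_sub (Nat.one_le_iff_ne_zero.2 hk)]
  · simp

theorem CubeSubadditive.le_sum_colorClass {f : (Fin n → Bool) → ℝ} (hsub : CubeSubadditive f)
    (c : Fin n → Fin k) {s : Finset (Fin k)} (hs : s.Nonempty) :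
    f (fun i => decide (c i ∈ s)) ≤ ∑ j ∈ s, f (colorClass c j) := by
  induction hs using Nonempty.cons_induction with
  | singleton a =>
    rw [sum_singleton]
    exact le_of_eq (congrArg f (funext fun i => by simp [colorClass]))
  | cons a s ha hs ih =>
    have hunion : (fun i => decide (c i ∈ cons a s ha))
        = fun i => colorClass c a i || decide (c i ∈ s) := by
      funext i
      simp [colorClass, Bool.decide_or]
    have hdisj : ∀ i, ¬(colorClass c a i = true ∧ decide (c i ∈ s) = true) := by
      rintro i ⟨hi, his⟩
      simp only [colorClass, decide_eq_true_eq] at hi his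
      exact ha (hi ▸ his)
    rw [hunion, sum_cons]
    linarith [hsub _ _ hdisj]

theorem CubeSubadditive.exists_div_le_colorClass {f : (Fin n → Bool) → ℝ}
    (hsub : CubeSubadditive f) (hk : k ≠ 0) (c : Fin n → Fin k) :
    ∃ j, f (fun _ => true) / k ≤ f (colorClass c j) := by
  have huniv : (univ : Finset (Fin k)).Nonempty :=
    univ_nonempty_iff.2 ⟨⟨0, Nat.pos_of_ne_zero hk⟩⟩
  have hsum : ∑ _j : Fin k, f (fun _ => true) / k ≤ ∑ j, f (colorClass c j) := by
    rw [sum_const, card_univ, Fintype.card_fin, nsmul_eq_mul,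
      mul_div_cancel₀ _ (by exact_mod_cast hk)]
    simpa using hsub.le_sum_colorClass c huniv
  obtain ⟨j, -, hj⟩ := exists_le_of_sum_le huniv hsum
  exact ⟨j, hj⟩

end Coloring

theorem coupling_bound_general (n : ℕ) (r : ℝ) (k : ℕ) (hk : 1 ≤ k)
    (f : (Fin n → Bool) → ℝ)
    (hsub : CubeSubadditive f)
    (h1 : f (fun _ => true) = r) :
    (1 : ℝ) / k ≤ cubePr n (1 / k) (fun x => r / k ≤ f x) := by
  have hk0 : k ≠ 0 := Nat.one_le_iff_ne_zero.1 hk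
  have hkpos : (0 : ℝ) < k := by exact_mod_cast hk
  have hcover := card_le_sum_card_filter_of_cover (α := Fin n → Fin k)
    (fun j c => r / k ≤ f (colorClass c j)) fun c => h1 ▸ hsub.exists_div_le_colorClass hk0 c
  replace hcover :
      (k : ℝ) ^ n ≤ ∑ j : Fin k, (k : ℝ) ^ n * cubePr n (1 / k) (r / k ≤ f ·) := by
    rw [sum_congr rfl fun j _ => pow_mul_cubePr_inv j _]
    exact_mod_cast (by simpa using hcover)
  rw [sum_const, card_univ, Fintype.card_fin, nsmul_eq_mul] at hcover
  rw [div_le_iff₀ hkpos]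
  nlinarith [pow_pos hkpos n]

/-- **Coupling bound** (inequality (2.3)): if `f : {0,1}^n → ℝ₊` is sub-additive with
`f(1,…,1) = r`, then for every integer `k ≥ 1` we have
`Pr_{x∼π_{1/k}^n}[f(x) ≥ r/k] ≥ 1/k`. -/
theorem coupling_bound (n : ℕ) (r : ℝ) (k : ℕ) (hk : 1 ≤ k)
    (f : (Fin n → Bool) → ℝ)
    (hnn : ∀ x, 0 ≤ f x)
    (hsub : CubeSubadditive f)
    (h1 : f (fun _ => true) = r) :
    (1 : ℝ) / k ≤ cubePr n (1 / k) (fun x => r / k ≤ f x) :=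
  coupling_bound_general n r k hk f hsub h1
end

section
/- For every σ ∈ (0,1] and every integer d ≥ 1 there exists a constant c(σ,d) > 0 such that the following holds. Let n, k be positive integers, let R be a commutative ring, and let rank : (R[x₁,…,x_n]_{≤d})^k → ℝ₊ be a function that is symmetric (rank(φ) = rank(−φ)), sub-additive (rank(φ+γ) ≤ rank(φ)+rank(γ)), and monotone under restrictions (rank(φ_{|I}) ≤ rank(φ) for all I ⊆ [n]). Then for every φ ∈ (R[x₁,…,x_n]_{≤d})^k: E_{J~[n]_σ}[rank(φ_{|J})] ≥ c(σ,d)·rank(φ). -/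
/-- A `k`-tuple of polynomials in variables `x₁,…,x_n` over a commutative ring `R`. -/
abbrev PolyTuple (R : Type*) [CommSemiring R] (n k : ℕ) := Fin k → MvPolynomial (Fin n) R

/-- `φ` is an element of `(R[x₁,…,x_n]_{≤d})^k`: each component has total degree at most `d`. -/
def DegLE {R : Type*} [CommSemiring R] {n k : ℕ} (d : ℕ) (φ : PolyTuple R n k) : Prop :=
  ∀ j, (φ j).totalDegree ≤ d

/-- The restriction `φ_{|I}`: substitute `0` for every variable `x_i` with `i ∉ I`. -/
noncomputable def prestrict {R : Type*} [CommSemiring R] {n k : ℕ} (I : Finset (Fin n))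
    (φ : PolyTuple R n k) : PolyTuple R n k :=
  fun j => MvPolynomial.aeval (fun i => if i ∈ I then MvPolynomial.X i else 0) (φ j)

/-!
Colour the variables uniformly at random with `m > d / σ` colours, `u : [n] → [m]`. A monomial of
degree at most `d` meets at most `d` colour classes, so Möbius inversion over sets of colours gives
`φ = ∑_{|S| ≤ d} ∑_{U ⊆ S} (-1)^|U| φ_{|u⁻¹(S \ U)}`, and symmetry with sub-additivity bounds
`rank φ` by the sum of the ranks of these restrictions. For a set `T` of at most `d` colours,
`u⁻¹(T)` is a `|T|/m`-random subset of `[n]` with `|T|/m ≤ σ`; as `J ↦ rank φ_{|J}` is monotone,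
coupling a `|T|/m`-random set inside a `σ`-random one shows its expectation only grows when the
probability is raised to `σ`. Averaging over `u` gives the theorem with
`c = 1 / ∑_{|S| ≤ d} 2^|S|`.
-/

open Finset MvPolynomial

theorem sum_powerset_neg_one_pow_card_ite_subset_sdiff {β : Type*} [DecidableEq β]
    (P S : Finset β) :
    ∑ U ∈ S.powerset, (if P ⊆ S \ U then (-1 : ℤ) ^ #U else 0) = if P = S then 1 else 0 := by
  rw [← sum_filter]
  by_cases hPS : P ⊆ S
  · have hfilter : {U ∈ S.powerset | P ⊆ S \ U} = (S \ P).powerset := by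
      ext U
      simp only [mem_filter, mem_powerset, subset_sdiff, hPS, true_and]
      exact ⟨fun h => ⟨h.1, h.2.symm⟩, fun h => ⟨h.1, h.2.symm⟩⟩
    rw [hfilter, sum_powerset_neg_one_pow_card]
    exact if_congr (sdiff_eq_empty_iff_subset.trans ⟨fun h => (hPS.antisymm h), (·.ge)⟩) rfl rfl
  · rw [filter_false_of_mem fun U _ h => hPS (h.trans sdiff_subset), sum_empty,
      if_neg fun h => hPS h.le]

namespace MvPolynomial

variable {R ι : Type*} [CommSemiring R] [DecidableEq ι]

noncomputable def restrictVars (I : Finset ι) : MvPolynomial ι R →ₐ[R] MvPolynomial ι R :=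
  aeval fun i => if i ∈ I then X i else 0

theorem restrictVars_monomial (I : Finset ι) (T : ι →₀ ℕ) (a : R) :
    restrictVars I (monomial T a) = if T.support ⊆ I then monomial T a else 0 := by
  rw [restrictVars, aeval_monomial, Finsupp.prod]
  split_ifs with h
  · rw [prod_congr rfl fun i hi => by rw [if_pos (h hi)], prod_X_pow_eq_monomial,
      algebraMap_eq, C_mul_monomial, mul_one]
  · obtain ⟨i, hi, hiI⟩ := not_subset.mp h
    rw [prod_eq_zero hi (by rw [if_neg hiI, zero_pow (Finsupp.mem_support_iff.mp hi)]), mul_zero]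

theorem coeff_restrictVars (I : Finset ι) (p : MvPolynomial ι R) (T : ι →₀ ℕ) :
    coeff T (restrictVars I p) = if T.support ⊆ I then coeff T p else 0 := by
  induction p using induction_on' with
  | monomial U a =>
    rw [restrictVars_monomial]
    by_cases hUT : U = T
    · subst hUT; split_ifs <;> simp
    · split_ifs <;> simp [coeff_monomial, hUT]
  | add p q hp hq => rw [map_add, coeff_add, coeff_add, hp, hq]; split_ifs <;> simp

theorem restrictVars_restrictVars {I J : Finset ι} (h : I ⊆ J) (p : MvPolynomial ι R) :
    restrictVars I (restrictVars J p) = restrictVars I p := by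
  ext T
  simp only [coeff_restrictVars]
  by_cases hI : T.support ⊆ I
  · rw [if_pos hI, if_pos hI, if_pos (hI.trans h)]
  · rw [if_neg hI, if_neg hI]

theorem totalDegree_restrictVars_le (I : Finset ι) (p : MvPolynomial ι R) :
    (restrictVars I p).totalDegree ≤ p.totalDegree := by
  refine totalDegree_le_of_support_subset fun T hT => ?_
  rw [mem_support_iff, coeff_restrictVars] at hT
  exact mem_support_iff.mpr fun h0 => hT (by rw [h0, ite_self])

theorem card_image_support_le_totalDegree {R ι β : Type*} [CommSemiring R] [DecidableEq β]
    (u : ι → β) {p : MvPolynomial ι R} {T : ι →₀ ℕ} (hT : coeff T p ≠ 0) :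
    #(T.support.image u) ≤ p.totalDegree :=
  calc #(T.support.image u) ≤ #T.support := card_image_le
    _ ≤ T.degree := by
      rw [Finsupp.degree, card_eq_sum_ones]
      exact sum_le_sum fun i hi => Nat.one_le_iff_ne_zero.mpr (Finsupp.mem_support_iff.mp hi)
    _ ≤ p.totalDegree := le_totalDegree (mem_support_iff.mpr hT)

theorem eq_sum_restrictVars_of_totalDegree_le {R ι β : Type*} [CommRing R] [Fintype ι]
    [DecidableEq ι] [Fintype β] [DecidableEq β] (u : ι → β) {p : MvPolynomial ι R} {d : ℕ}
    (hp : p.totalDegree ≤ d) :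
    p = ∑ S : Finset β with #S ≤ d, ∑ U ∈ S.powerset,
      (-1 : ℤ) ^ #U • restrictVars {i | u i ∈ S \ U} p := by
  ext T
  have hsub (V : Finset β) : T.support ⊆ ({i | u i ∈ V} : Finset ι) ↔ T.support.image u ⊆ V := by
    simp [subset_iff]
  simp only [coeff_sum, coeff_smul, coeff_restrictVars, hsub, smul_ite, smul_zero]
  simp only [← ite_zero_smul, ← sum_smul, sum_powerset_neg_one_pow_card_ite_subset_sdiff]
  rw [sum_ite_eq]
  by_cases hT : coeff T p = 0
  · rw [hT, smul_zero]
  · rw [if_pos (by simpa using (card_image_support_le_totalDegree u hT).trans hp), one_smul]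

end MvPolynomial

section PolyTuple

variable {R : Type*} {n k d : ℕ}

theorem prestrict_apply [CommSemiring R] (I : Finset (Fin n)) (φ : PolyTuple R n k) (j : Fin k) :
    prestrict I φ j = restrictVars I (φ j) :=
  rfl

theorem prestrict_prestrict [CommSemiring R] {I J : Finset (Fin n)} (h : I ⊆ J)
    (φ : PolyTuple R n k) : prestrict I (prestrict J φ) = prestrict I φ :=
  funext fun j => restrictVars_restrictVars h (φ j)

theorem DegLE.prestrict [CommSemiring R] {φ : PolyTuple R n k} (hφ : DegLE d φ)
    (I : Finset (Fin n)) : DegLE d (prestrict I φ) :=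
  fun j => (totalDegree_restrictVars_le I (φ j)).trans (hφ j)

theorem DegLE.add [CommSemiring R] {φ γ : PolyTuple R n k} (hφ : DegLE d φ) (hγ : DegLE d γ) :
    DegLE d (φ + γ) :=
  fun j => (totalDegree_add _ _).trans (max_le (hφ j) (hγ j))

theorem DegLE.sum [CommSemiring R] {ι : Type*} {s : Finset ι} {θ : ι → PolyTuple R n k}
    (h : ∀ i ∈ s, DegLE d (θ i)) : DegLE d (∑ i ∈ s, θ i) :=
  sum_induction θ (DegLE d) (fun _ _ => DegLE.add) (fun j => by simp) h

theorem DegLE.zsmul [CommRing R] {φ : PolyTuple R n k} (hφ : DegLE d φ) (c : ℤ) :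
    DegLE d (c • φ) :=
  fun j => (totalDegree_smul_le c (φ j)).trans (hφ j)

theorem eq_sum_prestrict [CommRing R] {β : Type*} [Fintype β] [DecidableEq β] (u : Fin n → β)
    {φ : PolyTuple R n k} (hφ : DegLE d φ) :
    φ = ∑ S : Finset β with #S ≤ d, ∑ U ∈ S.powerset,
      (-1 : ℤ) ^ #U • prestrict {i | u i ∈ S \ U} φ := by
  funext j
  simp only [Finset.sum_apply, Pi.smul_apply, prestrict_apply]
  exact eq_sum_restrictVars_of_totalDegree_le u (hφ j)

end PolyTuple

section Rank

variable {R : Type*} [CommRing R] {n k d : ℕ} {rank : PolyTuple R n k → ℝ}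

theorem rank_sum_le (h0 : rank 0 = 0)
    (hadd : ∀ φ γ, DegLE d φ → DegLE d γ → rank (φ + γ) ≤ rank φ + rank γ)
    {ι : Type*} (s : Finset ι) {θ : ι → PolyTuple R n k} (h : ∀ i ∈ s, DegLE d (θ i)) :
    rank (∑ i ∈ s, θ i) ≤ ∑ i ∈ s, rank (θ i) :=
  le_sum_of_subadditive_on_pred rank (DegLE d) h0.le hadd (fun _ _ => DegLE.add) θ h

theorem rank_neg_one_pow_zsmul (hsym : ∀ φ, DegLE d φ → rank (-φ) = rank φ)
    {φ : PolyTuple R n k} (hφ : DegLE d φ) (m : ℕ) : rank ((-1 : ℤ) ^ m • φ) = rank φ := by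
  rcases neg_one_pow_eq_or ℤ m with h | h <;> simp [h, hsym φ hφ]

theorem rank_le_sum_rank_prestrict {β : Type*} [Fintype β] [DecidableEq β] (h0 : rank 0 = 0)
    (hsym : ∀ φ, DegLE d φ → rank (-φ) = rank φ)
    (hadd : ∀ φ γ, DegLE d φ → DegLE d γ → rank (φ + γ) ≤ rank φ + rank γ)
    (u : Fin n → β) {φ : PolyTuple R n k} (hφ : DegLE d φ) :
    rank φ ≤ ∑ S : Finset β with #S ≤ d, ∑ U ∈ S.powerset,
      rank (prestrict {i | u i ∈ S \ U} φ) := by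
  have hterm (S U : Finset β) : DegLE d ((-1 : ℤ) ^ #U • prestrict {i | u i ∈ S \ U} φ) :=
    (hφ.prestrict _).zsmul _
  calc rank φ = rank (∑ S : Finset β with #S ≤ d, ∑ U ∈ S.powerset,
        (-1 : ℤ) ^ #U • prestrict {i | u i ∈ S \ U} φ) := by rw [← eq_sum_prestrict u hφ]
    _ ≤ ∑ S : Finset β with #S ≤ d, ∑ U ∈ S.powerset,
        rank ((-1 : ℤ) ^ #U • prestrict {i | u i ∈ S \ U} φ) := by
      refine (rank_sum_le h0 hadd _ fun S _ => DegLE.sum fun U _ => hterm S U).trans ?_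
      exact sum_le_sum fun S _ => rank_sum_le h0 hadd _ fun U _ => hterm S U
    _ = _ := by simp only [rank_neg_one_pow_zsmul hsym (hφ.prestrict _)]

theorem monotone_rank_prestrict (hmono : ∀ φ I, DegLE d φ → rank (prestrict I φ) ≤ rank φ)
    {φ : PolyTuple R n k} (hφ : DegLE d φ) : Monotone fun J => rank (prestrict J φ) :=
  fun A B hAB => by
    dsimp only
    rw [← prestrict_prestrict hAB φ]
    exact hmono _ A (hφ.prestrict B)

end Rank

section RandomSubset

variable {α : Type*} [Fintype α] [DecidableEq α]

noncomputable def randomSubsetExpect (p : ℝ) (g : Finset α → ℝ) : ℝ :=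
  ∑ J, p ^ #J * (1 - p) ^ #Jᶜ * g J

theorem randomSubsetExpect_mono {p q : ℝ} (hp : 0 ≤ p) (hpq : p ≤ q) (hq : q ≤ 1)
    {g : Finset α → ℝ} (hg : Monotone g) : randomSubsetExpect p g ≤ randomSubsetExpect q g := by
  -- the joint law of a `p`-random set `A` inside a `q`-random set `J`
  set π : Finset α → Finset α → ℝ := fun A J => p ^ #A * (q - p) ^ #(J \ A) * (1 - q) ^ #Jᶜ
  have hπ (A J : Finset α) : 0 ≤ π A J := by
    have : 0 ≤ q - p := sub_nonneg.mpr hpq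
    have : 0 ≤ 1 - q := sub_nonneg.mpr hq
    positivity
  have marginal_left (J : Finset α) : ∑ A ∈ J.powerset, π A J = q ^ #J * (1 - q) ^ #Jᶜ :=
    calc ∑ A ∈ J.powerset, π A J
        = (∑ A ∈ J.powerset, p ^ #A * (q - p) ^ (#J - #A)) * (1 - q) ^ #Jᶜ := by
          rw [sum_mul]
          exact sum_congr rfl fun A hA => by
            dsimp only [π]; rw [card_sdiff_of_subset (mem_powerset.mp hA)]
      _ = q ^ #J * (1 - q) ^ #Jᶜ := by rw [sum_pow_mul_eq_add_pow, add_sub_cancel]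
  have marginal_right (A : Finset α) :
      ∑ J ∈ Icc A univ, π A J = p ^ #A * (1 - p) ^ #Aᶜ := by
    have hcancel : ∀ B ∈ Aᶜ.powerset, (A ∪ B) \ A = B := fun B hB =>
      union_sdiff_cancel_left (disjoint_left.mpr fun _ ha hb =>
        mem_compl.mp (mem_powerset.mp hB hb) ha)
    rw [Icc_eq_image_powerset (subset_univ A), ← compl_eq_univ_sdiff,
      sum_image fun B₁ h₁ B₂ h₂ h => by rw [← hcancel B₁ h₁, ← hcancel B₂ h₂, h]]
    calc ∑ B ∈ Aᶜ.powerset, π A (A ∪ B)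
        = p ^ #A * ∑ B ∈ Aᶜ.powerset, (q - p) ^ #B * (1 - q) ^ (#Aᶜ - #B) := by
          rw [mul_sum]
          refine sum_congr rfl fun B hB => ?_
          dsimp only [π]
          rw [mul_assoc, hcancel B hB, compl_union, ← sdiff_eq_inter_compl,
            card_sdiff_of_subset (mem_powerset.mp hB)]
      _ = p ^ #A * (1 - p) ^ #Aᶜ := by rw [sum_pow_mul_eq_add_pow, sub_add_sub_cancel']
  calc randomSubsetExpect p g = ∑ A, ∑ J ∈ Icc A univ, π A J * g A := by
        simp only [randomSubsetExpect, ← sum_mul, marginal_right]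
    _ ≤ ∑ A, ∑ J ∈ Icc A univ, π A J * g J :=
        sum_le_sum fun A _ => sum_le_sum fun J hJ =>
          mul_le_mul_of_nonneg_left (hg (mem_Icc.mp hJ).1) (hπ A J)
    _ = ∑ J, ∑ A ∈ J.powerset, π A J * g J :=
        sum_comm' fun A J => by simp [mem_Icc]
    _ = randomSubsetExpect q g := by
        simp only [randomSubsetExpect, ← sum_mul, marginal_left]

theorem card_fun_preimage_eq {β : Type*} [Fintype β] [DecidableEq β] (T : Finset β)
    (J : Finset α) : #{u : α → β | ({i | u i ∈ T} : Finset α) = J} = #T ^ #J * #Tᶜ ^ #Jᶜ := by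
  have hfilter : ({u | ({i | u i ∈ T} : Finset α) = J} : Finset (α → β)) =
      Fintype.piFinset fun i => if i ∈ J then T else Tᶜ := by
    ext u
    simp only [mem_filter, mem_univ, true_and, Fintype.mem_piFinset, Finset.ext_iff]
    refine forall_congr' fun i => ?_
    split_ifs with hi <;> simp [hi]
  rw [hfilter, Fintype.card_piFinset]
  simp [apply_ite, prod_ite, ← compl_filter]

theorem sum_fun_preimage_eq {β : Type*} [Fintype β] [DecidableEq β] [Nonempty β]
    (T : Finset β) (g : Finset α → ℝ) :
    ∑ u : α → β, g {i | u i ∈ T} =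
      (Fintype.card β : ℝ) ^ Fintype.card α * randomSubsetExpect (#T / Fintype.card β) g := by
  set N : ℝ := (Fintype.card β : ℝ)
  have hN : N ≠ 0 := Nat.cast_ne_zero.mpr Fintype.card_ne_zero
  have hTc : (#Tᶜ : ℝ) = N * (1 - #T / N) := by
    rw [card_compl, Nat.cast_sub (card_le_univ T), mul_sub, mul_one, mul_div_cancel₀ _ hN]
  rw [← sum_fiberwise' univ (fun u : α → β => ({i | u i ∈ T} : Finset α)) g]
  simp only [sum_const, card_fun_preimage_eq, nsmul_eq_mul, randomSubsetExpect, mul_sum]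
  refine sum_congr rfl fun J _ => ?_
  rw [← card_add_card_compl J, pow_add, Nat.cast_mul, Nat.cast_pow, Nat.cast_pow, hTc,
    mul_pow, div_pow]
  field_simp

theorem sum_fun_preimage_le {β : Type*} [Fintype β] [DecidableEq β] [Nonempty β]
    {T : Finset β} {σ : ℝ} (hT : (#T : ℝ) / Fintype.card β ≤ σ) (hσ1 : σ ≤ 1)
    {g : Finset α → ℝ} (hg : Monotone g) :
    ∑ u : α → β, g {i | u i ∈ T} ≤
      (Fintype.card β : ℝ) ^ Fintype.card α * randomSubsetExpect σ g := by
  rw [sum_fun_preimage_eq]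
  gcongr
  exact randomSubsetExpect_mono (by positivity) hT hσ1 hg

end RandomSubset

theorem rank_le_mul_randomSubsetExpect {R : Type*} [CommRing R] {n k d m : ℕ} [NeZero m]
    {σ : ℝ} (hdσ : (d : ℝ) ≤ σ * m) (hσ1 : σ ≤ 1) {rank : PolyTuple R n k → ℝ}
    (h0 : rank 0 = 0) (hsym : ∀ φ, DegLE d φ → rank (-φ) = rank φ)
    (hadd : ∀ φ γ, DegLE d φ → DegLE d γ → rank (φ + γ) ≤ rank φ + rank γ)
    (hmono : ∀ φ I, DegLE d φ → rank (prestrict I φ) ≤ rank φ)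
    {φ : PolyTuple R n k} (hφ : DegLE d φ) :
    rank φ ≤ (∑ S : Finset (Fin m) with #S ≤ d, (2 : ℝ) ^ #S) *
      randomSubsetExpect σ fun J => rank (prestrict J φ) := by
  set E := randomSubsetExpect σ fun J => rank (prestrict J φ)
  have hm : (0 : ℝ) < m := Nat.cast_pos.mpr (NeZero.pos m)
  have hcolor (T : Finset (Fin m)) (hT : #T ≤ d) :
      ∑ u : Fin n → Fin m, rank (prestrict {i | u i ∈ T} φ) ≤ m ^ n * E := by
    have hτ : (#T : ℝ) / Fintype.card (Fin m) ≤ σ := by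
      rw [Fintype.card_fin, div_le_iff₀ hm]
      exact (Nat.cast_le.mpr hT).trans hdσ
    simpa only [Fintype.card_fin] using
      sum_fun_preimage_le hτ hσ1 (monotone_rank_prestrict hmono hφ)
  have hcolorings : (m : ℝ) ^ n * rank φ ≤
      (m : ℝ) ^ n * ((∑ S : Finset (Fin m) with #S ≤ d, (2 : ℝ) ^ #S) * E) :=
    calc (m : ℝ) ^ n * rank φ = ∑ _u : Fin n → Fin m, rank φ := by simp
      _ ≤ ∑ u : Fin n → Fin m, ∑ S : Finset (Fin m) with #S ≤ d, ∑ U ∈ S.powerset,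
          rank (prestrict {i | u i ∈ S \ U} φ) :=
        sum_le_sum fun u _ => rank_le_sum_rank_prestrict h0 hsym hadd u hφ
      _ = ∑ S : Finset (Fin m) with #S ≤ d, ∑ U ∈ S.powerset, ∑ u : Fin n → Fin m,
          rank (prestrict {i | u i ∈ S \ U} φ) := by
        rw [sum_comm]
        exact sum_congr rfl fun S _ => sum_comm
      _ ≤ ∑ S : Finset (Fin m) with #S ≤ d, ∑ U ∈ S.powerset, (m : ℝ) ^ n * E := by
        gcongr with S hS U
        exact hcolor _ ((card_le_card sdiff_subset).trans (mem_filter.mp hS).2)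
      _ = _ := by
        rw [sum_mul, mul_sum]
        refine sum_congr rfl fun S _ => ?_
        rw [sum_const, card_powerset, nsmul_eq_mul]
        push_cast
        ring
  exact le_of_mul_le_mul_left hcolorings (by positivity)

theorem linear_expectation_general (σ : ℝ) (hσ0 : 0 < σ) (hσ1 : σ ≤ 1) (d : ℕ) :
    ∃ c : ℝ, 0 < c ∧
      ∀ (n k : ℕ), 0 < n → 0 < k →
        ∀ (R : Type) [CommRing R] (rank : PolyTuple R n k → ℝ),
          -- rank(0) = 0 and rank takes nonnegative values
          rank 0 = 0 →
          (∀ φ, DegLE d φ → 0 ≤ rank φ) →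
          -- symmetry
          (∀ φ, DegLE d φ → rank (-φ) = rank φ) →
          -- sub-additivity
          (∀ φ γ : PolyTuple R n k, DegLE d φ → DegLE d γ →
            rank (φ + γ) ≤ rank φ + rank γ) →
          -- monotonicity under restrictions
          (∀ (φ : PolyTuple R n k) (I : Finset (Fin n)), DegLE d φ →
            rank (prestrict I φ) ≤ rank φ) →
          ∀ φ : PolyTuple R n k, DegLE d φ →
            c * rank φ ≤
              ∑ J : Finset (Fin n),
                (σ ^ J.card * (1 - σ) ^ (n - J.card)) * rank (prestrict J φ) := by
  obtain ⟨m, hm⟩ := exists_nat_gt ((d : ℝ) / σ)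
  have : NeZero m := ⟨by
    rintro rfl
    exact (div_nonneg d.cast_nonneg hσ0.le).not_gt (by exact_mod_cast hm)⟩
  have hdσ : (d : ℝ) ≤ σ * m := by
    rw [div_lt_iff₀ hσ0] at hm
    linarith
  set W := ∑ S : Finset (Fin m) with #S ≤ d, (2 : ℝ) ^ #S
  have hW : 0 < W := sum_pos (fun S _ => by positivity) ⟨∅, by simp⟩
  refine ⟨1 / W, by positivity, fun n k _ _ R _ rank h0 _ hsym hadd hmono φ hφ => ?_⟩
  have key := rank_le_mul_randomSubsetExpect hdσ hσ1 h0 hsym hadd hmono hφ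
  simp only [randomSubsetExpect, card_compl, Fintype.card_fin] at key
  rw [div_mul_eq_mul_div, one_mul, div_le_iff₀ hW]
  linarith

/-- **Linear expectation lemma** (Lemma 3.2): for every `σ ∈ (0,1]` and `d ≥ 1` there is
`c(σ,d) > 0` such that for all positive integers `n, k`, every commutative ring `R` and every
symmetric, sub-additive, restriction-monotone rank function on `(R[x₁,…,x_n]_{≤d})^k`, for
any `φ ∈ (R[x₁,…,x_n]_{≤d})^k` the expected rank of the restriction of `φ` to a `σ`-random
subset `J ⊆ [n]` is at least `c(σ,d)·rank φ`. -/
theorem linear_expectation (σ : ℝ) (hσ0 : 0 < σ) (hσ1 : σ ≤ 1) (d : ℕ) (hd : 1 ≤ d) :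
    ∃ c : ℝ, 0 < c ∧
      ∀ (n k : ℕ), 0 < n → 0 < k →
        ∀ (R : Type) [CommRing R] (rank : PolyTuple R n k → ℝ),
          -- rank(0) = 0 and rank takes nonnegative values
          rank 0 = 0 →
          (∀ φ, DegLE d φ → 0 ≤ rank φ) →
          -- symmetry
          (∀ φ, DegLE d φ → rank (-φ) = rank φ) →
          -- sub-additivity
          (∀ φ γ : PolyTuple R n k, DegLE d φ → DegLE d γ →
            rank (φ + γ) ≤ rank φ + rank γ) →
          -- monotonicity under restrictions
          (∀ (φ : PolyTuple R n k) (I : Finset (Fin n)), DegLE d φ →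
            rank (prestrict I φ) ≤ rank φ) →
          ∀ φ : PolyTuple R n k, DegLE d φ →
            c * rank φ ≤
              ∑ J : Finset (Fin n),
                (σ ^ J.card * (1 - σ) ^ (n - J.card)) * rank (prestrict J φ) :=
  linear_expectation_general σ hσ0 hσ1 d
end

section
/- Let F be a field, d ∈ ℕ, and suppose rank : (F^∞)^{⊗d} → ℝ₊ satisfies the linear core property (with some constants L, β > 0 and rank threshold r₀), monotonicity under restrictions, and the restriction Lipschitz property. Then for every σ ∈ (0,1] there exist constants C, κ > 0 such that for every n₁,…,n_d ∈ ℕ and every d-tensor T : [n₁]×⋯×[n_d] → F: if I₁,…,I_d are independent random subsets with I_i ~ [n_i]_σ, then Pr[rank(T_{|I₁×⋯×I_d}) ≥ κ·rank(T)] ≥ 1 − C·e^{−κ·rank(T)}. -/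
/-- `(F^∞)^{⊗d}`: the space of finitely supported `d`-tensors over `F`,
i.e. finitely supported maps `ℕ^d → F`. -/
abbrev TensorD (F : Type*) [Zero F] (d : ℕ) := (Fin d → ℕ) →₀ F

/-- The restriction (sub-tensor) `T_{|I₁×⋯×I_d}` of a tensor `T`,
obtained by zeroing out all entries outside `I₁×⋯×I_d`. -/
def trestrict {F : Type*} [Zero F] {d : ℕ} (T : TensorD F d) (I : Fin d → Finset ℕ) :
    TensorD F d :=
  T.filter (fun x => ∀ i, x i ∈ I i)

open Classical in
/-- The probability of the event `E` when, for each `i : Fin d`, a subset `Iᵢ ⊆ [nᵢ]` is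
chosen at random, each element independently with probability `σ`. -/
noncomputable def tensorPr {d : ℕ} (n : Fin d → ℕ) (σ : ℝ)
    (E : (∀ i : Fin d, Finset (Fin (n i))) → Prop) : ℝ :=
  ∑ I : (∀ i : Fin d, Finset (Fin (n i))),
    if E I then ∏ i, σ ^ (I i).card * (1 - σ) ^ (n i - (I i).card) else 0

/-!
Flatten the coordinates into one finite ground set `Σ i, Fin nᵢ`, on which `S ↦ rank T_{|S}` is
nonnegative, monotone, `1`-Lipschitz under adding points, and has linear cores. One round of
`τ`-sampling keeps a `β/2` fraction of the rank of `S` except with probability `e^{-rank S}`: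
failing forces the sample to miss `⌈β r/2⌉` points of a core of size at most `dL·r`, and a union
bound costs `C(dLr, βr/2)(1-τ)^{βr/2}`, which is at most `e^{-r}` once `1 - τ` is small enough.
A `σ`-random subset is the intersection of `k` independent `τ`-random subsets with `τᵏ = σ`, so
iterating `k` rounds gives `κ = (β/2)ᵏ` with failure probability at most `k e^{-κ rank T}`.
-/

open Finset Real

namespace RandomSubset

variable {α : Type*}

/-- `𝔼 f(I)` for a random subset `I ~ s_p`. -/
noncomputable def expect (s : Finset α) (p : ℝ) (f : Finset α → ℝ) : ℝ :=
  ∑ I ∈ s.powerset, p ^ I.card * (1 - p) ^ (s.card - I.card) * f I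

open Classical in
noncomputable def prob (s : Finset α) (p : ℝ) (E : Finset α → Prop) : ℝ :=
  expect s p fun I => if E I then 1 else 0

variable {s : Finset α} {p : ℝ}

theorem expect_congr {f g : Finset α → ℝ} (h : ∀ I ⊆ s, f I = g I) :
    expect s p f = expect s p g :=
  sum_congr rfl fun I hI => by rw [h I (mem_powerset.1 hI)]

theorem expect_mono (hp0 : 0 ≤ p) (hp1 : p ≤ 1) {f g : Finset α → ℝ}
    (h : ∀ I ⊆ s, f I ≤ g I) : expect s p f ≤ expect s p g :=
  sum_le_sum fun I hI => mul_le_mul_of_nonneg_left (h I (mem_powerset.1 hI))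
    (mul_nonneg (pow_nonneg hp0 _) (pow_nonneg (sub_nonneg.2 hp1) _))

theorem expect_add (f g : Finset α → ℝ) :
    expect s p (fun I => f I + g I) = expect s p f + expect s p g := by
  simp only [expect, mul_add, sum_add_distrib]

theorem expect_const_mul (c : ℝ) (f : Finset α → ℝ) :
    expect s p (fun I => c * f I) = c * expect s p f := by
  simp only [expect, mul_sum]
  exact sum_congr rfl fun _ _ => by ring

theorem expect_sum {ι : Type*} (t : Finset ι) (f : ι → Finset α → ℝ) :
    expect s p (fun I => ∑ j ∈ t, f j I) = ∑ j ∈ t, expect s p (f j) := by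
  simp only [expect, mul_sum]
  exact sum_comm

theorem expect_empty (p : ℝ) (f : Finset α → ℝ) : expect ∅ p f = f ∅ := by
  simp [expect]

theorem prob_congr {E E' : Finset α → Prop} (h : ∀ I ⊆ s, E I ↔ E' I) :
    prob s p E = prob s p E' :=
  expect_congr fun I hI => by classical exact if_congr (h I hI) rfl rfl

theorem prob_mono (hp0 : 0 ≤ p) (hp1 : p ≤ 1) {E E' : Finset α → Prop}
    (h : ∀ I ⊆ s, E I → E' I) : prob s p E ≤ prob s p E' :=
  expect_mono hp0 hp1 fun I hI => by split_ifs <;> simp_all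

variable [DecidableEq α]

theorem expect_insert {a : α} (ha : a ∉ s) (f : Finset α → ℝ) :
    expect (insert a s) p f
      = p * expect s p (fun I => f (insert a I)) + (1 - p) * expect s p f := by
  unfold expect
  rw [sum_powerset_insert ha, mul_sum, mul_sum, add_comm]
  congr 1 <;> refine sum_congr rfl fun I hI => ?_
  · have hIs : I.card ≤ s.card := card_le_card (mem_powerset.1 hI)
    rw [card_insert_of_notMem fun h => ha (mem_powerset.1 hI h), card_insert_of_notMem ha,
      Nat.add_sub_add_right]
    ring
  · have hIs : I.card ≤ s.card := card_le_card (mem_powerset.1 hI)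
    rw [card_insert_of_notMem ha, Nat.sub_add_comm hIs]
    ring

theorem expect_const (s : Finset α) (p c : ℝ) : expect s p (fun _ => c) = c := by
  induction s using Finset.induction with
  | empty => exact expect_empty p _
  | insert _ _ ha ih => rw [expect_insert ha, ih]; ring

theorem expect_one (s : Finset α) (f : Finset α → ℝ) : expect s 1 f = f s := by
  induction s using Finset.induction generalizing f with
  | empty => exact expect_empty 1 f
  | insert _ _ ha ih => rw [expect_insert ha, ih, ih]; ring

/-- A `pq`-random subset is the intersection of independent `p`- and `q`-random subsets. -/
theorem expect_mul (s : Finset α) (p q : ℝ) (f : Finset α → ℝ) :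
    expect s (p * q) f = expect s p (fun A => expect s q (fun B => f (A ∩ B))) := by
  induction s using Finset.induction generalizing f with
  | empty => simp only [expect_empty, empty_inter]
  | @insert a s ha ih =>
    have hA : ∀ A ⊆ s, expect (insert a s) q (fun B => f (A ∩ B)) =
        expect s q (fun B => f (A ∩ B)) := fun A hA => by
      rw [expect_insert ha, expect_congr (g := fun B => f (A ∩ B)) fun B _ => by
        rw [inter_insert_of_notMem fun h => ha (hA h)]]
      ring
    have hinsA : ∀ A ⊆ s, expect (insert a s) q (fun B => f (insert a A ∩ B)) =
        q * expect s q (fun B => f (insert a (A ∩ B))) +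
          (1 - q) * expect s q (fun B => f (A ∩ B)) := fun A _ => by
      have hin : expect s q (fun B => f (insert a A ∩ insert a B)) =
          expect s q (fun B => f (insert a (A ∩ B))) := by
        simp only [insert_inter_distrib]
      have hout : expect s q (fun B => f (insert a A ∩ B)) = expect s q (fun B => f (A ∩ B)) :=
        expect_congr fun B hB => by rw [insert_inter_of_notMem fun h => ha (hB h)]
      rw [expect_insert ha, hin, hout]
    rw [expect_insert ha, expect_insert ha, ih, ih, expect_congr hA, expect_congr hinsA,
      expect_add, expect_const_mul, expect_const_mul]
    ring

theorem prob_nonneg (hp0 : 0 ≤ p) (hp1 : p ≤ 1) (E : Finset α → Prop) : 0 ≤ prob s p E := by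
  rw [← expect_const s p 0]
  exact expect_mono hp0 hp1 fun I _ => by split_ifs <;> norm_num

theorem prob_le_one (hp0 : 0 ≤ p) (hp1 : p ≤ 1) (E : Finset α → Prop) : prob s p E ≤ 1 := by
  conv_rhs => rw [← expect_const s p 1]
  exact expect_mono hp0 hp1 fun I _ => by split_ifs <;> norm_num

theorem prob_not (E : Finset α → Prop) : prob s p (fun I => ¬ E I) = 1 - prob s p E := by
  rw [eq_sub_iff_add_eq, prob, prob, ← expect_add]
  conv_rhs => rw [← expect_const s p 1]
  exact expect_congr fun I _ => by split_ifs <;> simp_all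

theorem prob_one_of_not {E : Finset α → Prop} (h : ¬ E s) : prob s 1 E = 0 := by
  rw [prob, expect_one, if_neg h]

theorem prob_disjoint {K : Finset α} (hK : K ⊆ s) :
    prob s p (Disjoint K) = (1 - p) ^ K.card := by
  induction s using Finset.induction generalizing K with
  | empty => simp [subset_empty.1 hK, prob, expect_empty]
  | @insert a s ha ih =>
    rw [prob, expect_insert ha]
    by_cases haK : a ∈ K
    · have hK' : K.erase a ⊆ s := subset_insert_iff.1 hK
      have h1 : prob s p (fun I => Disjoint K (insert a I)) = 0 := by
        rw [prob, expect_congr (g := fun _ => 0) fun I _ => by simp [haK], expect_const]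
      have h2 : prob s p (Disjoint K) = prob s p (Disjoint (K.erase a)) :=
        prob_congr fun I hI => by
          rw [disjoint_erase_comm, erase_eq_of_notMem fun h => ha (hI h)]
      rw [← prob, ← prob, h1, h2, ih hK', ← card_erase_add_one haK, pow_succ]
      ring
    · have hKs : K ⊆ s := (subset_insert_iff_of_notMem haK).1 hK
      have h1 : prob s p (fun I => Disjoint K (insert a I)) = prob s p (Disjoint K) :=
        prob_congr fun I _ => by simp [disjoint_insert_right, haK]
      rw [← prob, ← prob, h1, ih hKs]
      ring

/-- Union bound over the `m`-subsets of `K` that the random subset misses. -/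
theorem prob_le_card_sdiff_le (hp0 : 0 ≤ p) (hp1 : p ≤ 1) {K : Finset α} (hK : K ⊆ s)
    (m : ℕ) : prob s p (fun I => m ≤ (K \ I).card) ≤ K.card.choose m * (1 - p) ^ m := by
  have hcover : ∀ I ⊆ s, (if m ≤ (K \ I).card then (1 : ℝ) else 0)
      ≤ ∑ K' ∈ K.powersetCard m, if Disjoint K' I then 1 else 0 := fun I _ => by
    split_ifs with h
    · obtain ⟨K', hK', hcard⟩ := exists_subset_card_eq h
      have hmem : K' ∈ K.powersetCard m := mem_powersetCard.2 ⟨hK'.trans sdiff_subset, hcard⟩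
      have hdisj : Disjoint K' I := disjoint_of_subset_left hK' sdiff_disjoint
      refine le_trans ?_ (single_le_sum (fun _ _ => by split_ifs <;> norm_num) hmem)
      simp [hdisj]
    · exact sum_nonneg fun _ _ => by split_ifs <;> norm_num
  calc prob s p (fun I => m ≤ (K \ I).card)
      ≤ ∑ K' ∈ K.powersetCard m, prob s p (Disjoint K') := by
        simp only [prob]
        rw [← expect_sum]
        convert expect_mono hp0 hp1 hcover
    _ = K.card.choose m * (1 - p) ^ m := by
        rw [sum_congr rfl fun K' hK' => prob_disjoint ((mem_powersetCard.1 hK').1.trans hK),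
          sum_congr rfl fun K' hK' => by rw [(mem_powersetCard.1 hK').2], sum_const,
          card_powersetCard, nsmul_eq_mul]

end RandomSubset

open RandomSubset

theorem exists_pow_eq_one_sub_le {σ ε : ℝ} (hσ0 : 0 < σ) (hσ1 : σ ≤ 1) (hε : 0 < ε) :
    ∃ (k : ℕ) (τ : ℝ), 0 ≤ τ ∧ τ ≤ 1 ∧ τ ^ k = σ ∧ 1 - τ ≤ ε := by
  set k : ℕ := ⌈-log σ / ε⌉₊ + 1
  have hk : (0 : ℝ) < k := by positivity
  have hlog : log σ ≤ 0 := log_nonpos hσ0.le hσ1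
  refine ⟨k, exp (log σ / k), (exp_pos _).le, exp_le_one_iff.2 (div_nonpos_of_nonpos_of_nonneg
    hlog hk.le), by rw [← exp_nat_mul, mul_div_cancel₀ _ hk.ne', exp_log hσ0], ?_⟩
  have hkε : -log σ ≤ k * ε := (div_le_iff₀ hε).1 <| (Nat.le_ceil _).trans <| by
    exact_mod_cast Nat.le_succ _
  have hexp := add_one_le_exp (log σ / k)
  have : -(log σ / k) ≤ ε := by rw [← neg_div, div_le_iff₀ hk]; linarith
  linarith

/-- The choice of `ε` makes `2 ^ (M r) * ε ^ (β r / 2) = exp (-r)`. -/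
theorem exists_choose_mul_pow_le_exp {β M : ℝ} (hβ : 0 < β) (hM : 0 ≤ M) :
    ∃ ε > 0, ∀ q : ℝ, 0 ≤ q → q ≤ ε → ∀ (N : ℕ) (r : ℝ), (N : ℝ) ≤ M * r →
      (N.choose ⌈β * r / 2⌉₊ : ℝ) * q ^ ⌈β * r / 2⌉₊ ≤ exp (-r) := by
  set ε := exp (-(2 / β * (1 + M * log 2)))
  have hε1 : ε ≤ 1 := exp_le_one_iff.2 <| neg_nonpos.2 <| by positivity
  refine ⟨ε, exp_pos _, fun q hq0 hqε N r hN => ?_⟩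
  set m := ⌈β * r / 2⌉₊
  have hchoose : (N.choose m : ℝ) ≤ 2 ^ (M * r) := calc
    (N.choose m : ℝ) ≤ 2 ^ N := by exact_mod_cast Nat.choose_le_two_pow N m
    _ = 2 ^ (N : ℝ) := (rpow_natCast 2 N).symm
    _ ≤ 2 ^ (M * r) := rpow_le_rpow_of_exponent_le one_le_two hN
  have hpow : q ^ m ≤ ε ^ (β * r / 2) := calc
    q ^ m ≤ ε ^ m := pow_le_pow_left₀ hq0 hqε m
    _ = ε ^ (m : ℝ) := (rpow_natCast ε m).symm
    _ ≤ ε ^ (β * r / 2) := rpow_le_rpow_of_exponent_ge (exp_pos _) hε1 (Nat.le_ceil _)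
  calc (N.choose m : ℝ) * q ^ m ≤ 2 ^ (M * r) * ε ^ (β * r / 2) :=
        mul_le_mul hchoose hpow (by positivity) (by positivity)
    _ = exp (-r) := by
        rw [rpow_def_of_pos two_pos, rpow_def_of_pos (exp_pos _), log_exp, ← exp_add]
        congr 1
        field_simp
        ring

structure IsLinearCoreRank {α : Type*} [DecidableEq α] (g : Finset α → ℝ) (M β r₀ : ℝ) :
    Prop where
  nonneg : ∀ S, 0 ≤ g S
  mono : Monotone g
  le_add_card_sdiff : ∀ ⦃S S' : Finset α⦄, S ⊆ S' → g S' ≤ g S + (S' \ S).card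
  exists_core : ∀ S, r₀ ≤ g S → ∃ J ⊆ S, (J.card : ℝ) ≤ M * g S ∧ β * g S ≤ g J

section

variable {α : Type*} [DecidableEq α] {g : Finset α → ℝ}

/-- If the random subset keeps `S ∩ I` below `g J - t`, it misses more than `t` points of `J`. -/
theorem prob_lt_sub_le (hmono : Monotone g)
    (hlip : ∀ ⦃S S' : Finset α⦄, S ⊆ S' → g S' ≤ g S + (S' \ S).card)
    {s S J : Finset α} (hJS : J ⊆ S) (hJs : J ⊆ s) {p : ℝ} (hp0 : 0 ≤ p) (hp1 : p ≤ 1)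
    (t : ℝ) : prob s p (fun I => g (S ∩ I) < g J - t)
      ≤ J.card.choose ⌈t⌉₊ * (1 - p) ^ ⌈t⌉₊ := by
  refine le_trans (prob_mono hp0 hp1 fun I _ hI => ?_) (prob_le_card_sdiff_le hp0 hp1 hJs _)
  have hJI : g J ≤ g (J ∩ I) + (J \ I).card := by
    simpa only [sdiff_inter_self_left] using hlip (inter_subset_left (s₁ := J) (s₂ := I))
  have hSI : g (J ∩ I) ≤ g (S ∩ I) := hmono (inter_subset_inter_right hJS)
  exact Nat.ceil_le.2 (by linarith)

variable [Fintype α]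

/-- A `τ^(k+1)`-subset is `A ∩ B` with `A` a `τ`-subset and `B` a `τ^k`-subset; when the first
round `A` succeeds, induction applies to `S ∩ A`. -/
theorem prob_lt_pow_mul_le {γ τ R : ℝ} (hg0 : ∀ S, 0 ≤ g S) (hγ0 : 0 ≤ γ) (hγ1 : γ ≤ 1)
    (hτ0 : 0 ≤ τ) (hτ1 : τ ≤ 1)
    (hstep : ∀ S, R ≤ g S → prob univ τ (fun I => g (S ∩ I) < γ * g S) ≤ exp (-g S))
    (k : ℕ) (S : Finset α) (hS : R ≤ γ ^ k * g S) :
    prob univ (τ ^ k) (fun I => g (S ∩ I) < γ ^ k * g S) ≤ k * exp (-(γ ^ k * g S)) := by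
  induction k generalizing S with
  | zero => simp [prob_one_of_not]
  | succ k ih =>
    set e := exp (-(γ ^ (k + 1) * g S))
    have hshrink : γ ^ (k + 1) * g S ≤ g S :=
      mul_le_of_le_one_left (hg0 S) (pow_le_one₀ hγ0 hγ1)
    have hbad : prob univ τ (fun A => g (S ∩ A) < γ * g S) ≤ e :=
      (hstep S (hS.trans hshrink)).trans (exp_le_exp.2 (neg_le_neg hshrink))
    have hinner : ∀ A ⊆ univ, prob univ (τ ^ k) (fun B => g (S ∩ (A ∩ B)) < γ ^ (k + 1) * g S)
        ≤ (if g (S ∩ A) < γ * g S then 1 else 0) + k * e := fun A _ => by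
      split_ifs with hA
      · have hle := prob_le_one (s := univ) (pow_nonneg hτ0 k) (pow_le_one₀ hτ0 hτ1)
          (fun B => g (S ∩ (A ∩ B)) < γ ^ (k + 1) * g S)
        have : 0 ≤ (k : ℝ) * e := by positivity
        linarith
      · have hA' : γ ^ (k + 1) * g S ≤ γ ^ k * g (S ∩ A) := by
          rw [pow_succ, mul_assoc]
          exact mul_le_mul_of_nonneg_left (not_lt.1 hA) (pow_nonneg hγ0 k)
        calc _ ≤ prob univ (τ ^ k) (fun B => g (S ∩ A ∩ B) < γ ^ k * g (S ∩ A)) :=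
              prob_mono (pow_nonneg hτ0 k) (pow_le_one₀ hτ0 hτ1) fun B _ hB => by
                rw [inter_assoc]; linarith
          _ ≤ k * exp (-(γ ^ k * g (S ∩ A))) := ih _ (hS.trans hA')
          _ ≤ 0 + k * e := by
              rw [zero_add]
              exact mul_le_mul_of_nonneg_left (exp_le_exp.2 (neg_le_neg hA')) k.cast_nonneg
    calc prob univ (τ ^ (k + 1)) (fun I => g (S ∩ I) < γ ^ (k + 1) * g S)
        = expect univ τ (fun A =>
            prob univ (τ ^ k) (fun B => g (S ∩ (A ∩ B)) < γ ^ (k + 1) * g S)) := by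
          rw [prob, pow_succ', RandomSubset.expect_mul]; rfl
      _ ≤ expect univ τ (fun A => (if g (S ∩ A) < γ * g S then 1 else 0) + k * e) :=
          expect_mono hτ0 hτ1 hinner
      _ ≤ e + k * e := by
          rw [RandomSubset.expect_add, RandomSubset.expect_const]
          exact add_le_add_left hbad _
      _ = (k + 1 : ℕ) * e := by push_cast; ring

end

namespace IsLinearCoreRank

variable {M β r₀ : ℝ}

theorem prob_lt_half_mul_le {α : Type*} [DecidableEq α] [Fintype α] {g : Finset α → ℝ}
    (hg : IsLinearCoreRank g M β r₀) {τ : ℝ} (hτ0 : 0 ≤ τ)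
    (hτ1 : τ ≤ 1) (hτ : ∀ (N : ℕ) (r : ℝ), (N : ℝ) ≤ M * r →
      (N.choose ⌈β * r / 2⌉₊ : ℝ) * (1 - τ) ^ ⌈β * r / 2⌉₊ ≤ exp (-r))
    {S : Finset α} (hS : r₀ ≤ g S) :
    prob univ τ (fun I => g (S ∩ I) < β / 2 * g S) ≤ exp (-g S) := by
  obtain ⟨J, hJS, hJcard, hJcore⟩ := hg.exists_core S hS
  calc prob univ τ (fun I => g (S ∩ I) < β / 2 * g S)
      ≤ prob univ τ (fun I => g (S ∩ I) < g J - β * g S / 2) :=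
        prob_mono hτ0 hτ1 fun I _ hI => by linarith
    _ ≤ J.card.choose ⌈β * g S / 2⌉₊ * (1 - τ) ^ ⌈β * g S / 2⌉₊ :=
        prob_lt_sub_le hg.mono hg.le_add_card_sdiff hJS (subset_univ J) hτ0 hτ1 _
    _ ≤ exp (-g S) := hτ _ _ hJcard

theorem exists_one_sub_mul_exp_le_prob {σ : ℝ} (hσ0 : 0 < σ) (hσ1 : σ ≤ 1) (hβ0 : 0 < β)
    (hβ1 : β ≤ 1) (hM : 0 ≤ M) :
    ∃ C κ : ℝ, 0 < C ∧ 0 < κ ∧ ∀ (α : Type) [DecidableEq α] [Fintype α] (g : Finset α → ℝ),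
      IsLinearCoreRank g M β r₀ →
        1 - C * exp (-κ * g univ) ≤ prob univ σ (fun I => κ * g univ ≤ g I) := by
  obtain ⟨ε, hε, hchoose⟩ := exists_choose_mul_pow_le_exp hβ0 hM
  obtain ⟨k, τ, hτ0, hτ1, hτk, hτε⟩ := exists_pow_eq_one_sub_le hσ0 hσ1 hε
  refine ⟨k + exp r₀, (β / 2) ^ k, by positivity, by positivity, fun α _ _ g hg => ?_⟩
  set e := exp (-((β / 2) ^ k * g univ))
  have hke : 0 ≤ (k : ℝ) * e := by positivity
  rw [neg_mul, add_mul]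
  by_cases hlarge : r₀ ≤ (β / 2) ^ k * g univ
  · have hfail := prob_lt_pow_mul_le hg.nonneg (by positivity) (by linarith) hτ0 hτ1
      (fun S hS => hg.prob_lt_half_mul_le hτ0 hτ1
        (hchoose _ (sub_nonneg.2 hτ1) (by linarith)) hS) k univ hlarge
    simp only [univ_inter, hτk] at hfail
    simp only [← not_lt, prob_not]
    linarith [mul_pos (exp_pos r₀) (exp_pos (-((β / 2) ^ k * g univ)))]
  · have hone : 1 ≤ exp r₀ * e := by
      rw [← exp_add]
      exact one_le_exp (by linarith)
    linarith [prob_nonneg (s := univ) hσ0.le hσ1 (fun I => (β / 2) ^ k * g univ ≤ g I)]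

end IsLinearCoreRank

noncomputable def Finset.piEquivSigma {ι : Type*} [Fintype ι] [DecidableEq ι] (κ : ι → Type*) :
    (∀ i, Finset (κ i)) ≃ Finset (Σ i, κ i) where
  toFun I := univ.sigma I
  invFun S i := S.preimage (Sigma.mk i) sigma_mk_injective.injOn
  left_inv I := by ext i a; simp
  right_inv S := S.sigma_preimage_mk_of_subset (subset_univ _)

section Tensor

variable {d : ℕ} {n : Fin d → ℕ}

theorem tensorPr_eq_prob (σ : ℝ) (E : (∀ i : Fin d, Finset (Fin (n i))) → Prop) :
    tensorPr n σ E = prob univ σ (fun S => E ((piEquivSigma _).symm S)) := by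
  rw [prob, RandomSubset.expect, powerset_univ, ← (piEquivSigma fun i => Fin (n i)).sum_comp]
  refine Fintype.sum_congr _ _ fun I => ?_
  have hcard : (piEquivSigma _ I).card = ∑ i, (I i).card := card_sigma _ _
  have hsub : ∑ i, (n i - (I i).card) = ∑ i, n i - ∑ i, (I i).card :=
    sum_tsub_distrib _ fun i _ => by simpa using card_le_univ (I i)
  simp only [card_univ, Fintype.card_sigma, Fintype.card_fin, hcard,
    prod_mul_distrib, prod_pow_eq_pow_sum, hsub, mul_ite, mul_one, mul_zero]
  split_ifs <;> simp_all

noncomputable def coordSets (n : Fin d → ℕ) (S : Finset (Σ i, Fin (n i))) (i : Fin d) : Finset ℕ :=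
  ((piEquivSigma _).symm S i).image Fin.val

theorem mem_coordSets {S : Finset (Σ i, Fin (n i))} {i : Fin d} {v : ℕ} :
    v ∈ coordSets n S i ↔ ∃ a : Fin (n i), ⟨i, a⟩ ∈ S ∧ (a : ℕ) = v := by
  simp [coordSets, piEquivSigma]

theorem coordSets_mono {S S' : Finset (Σ i, Fin (n i))} (h : S ⊆ S') (i : Fin d) :
    coordSets n S i ⊆ coordSets n S' i := fun v hv => by
  obtain ⟨a, ha, rfl⟩ := mem_coordSets.1 hv
  exact mem_coordSets.2 ⟨a, h ha, rfl⟩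

theorem sum_card_coordSets (S : Finset (Σ i, Fin (n i))) :
    ∑ i, (coordSets n S i).card = S.card := by
  conv_rhs => rw [← (piEquivSigma _).apply_symm_apply S]
  simp only [coordSets, card_image_of_injective _ Fin.val_injective]
  exact (card_sigma _ _).symm

theorem coordSets_sdiff (S S' : Finset (Σ i, Fin (n i))) (i : Fin d) :
    coordSets n (S' \ S) i = coordSets n S' i \ coordSets n S i := by
  ext v
  simp only [mem_sdiff, mem_coordSets]
  constructor
  · rintro ⟨a, ⟨haS', haS⟩, rfl⟩
    exact ⟨⟨a, haS', rfl⟩, fun ⟨b, hb, hba⟩ => haS (Fin.val_injective hba ▸ hb)⟩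
  · rintro ⟨⟨a, haS', rfl⟩, hS⟩
    exact ⟨a, ⟨haS', fun haS => hS ⟨a, haS, rfl⟩⟩, rfl⟩

theorem coordSets_filter (S : Finset (Σ i, Fin (n i))) (J : Fin d → Finset ℕ) (i : Fin d) :
    coordSets n {x ∈ S | (x.2 : ℕ) ∈ J x.1} i = coordSets n S i ∩ J i := by
  ext v
  simp only [mem_inter, mem_coordSets, mem_filter]
  constructor
  · rintro ⟨a, ⟨haS, haJ⟩, rfl⟩
    exact ⟨⟨a, haS, rfl⟩, haJ⟩
  · rintro ⟨⟨a, haS, rfl⟩, haJ⟩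
    exact ⟨a, ⟨haS, haJ⟩, rfl⟩

theorem coordSets_univ (i : Fin d) : coordSets n univ i = range (n i) := by
  ext v
  simp only [mem_coordSets, mem_univ, true_and, mem_range]
  exact ⟨fun ⟨a, ha⟩ => ha ▸ a.isLt, fun h => ⟨⟨v, h⟩, rfl⟩⟩

end Tensor

section Restrict

variable {F : Type*} [Zero F] {d : ℕ}

theorem trestrict_trestrict (T : TensorD F d) (A B : Fin d → Finset ℕ) :
    trestrict (trestrict T A) B = trestrict T (fun i => A i ∩ B i) := by
  ext x
  simp only [trestrict, Finsupp.filter_apply, mem_inter, forall_and]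
  by_cases hA : ∀ i, x i ∈ A i <;> by_cases hB : ∀ i, x i ∈ B i <;> simp [hA, hB]

theorem trestrict_eq_self {T : TensorD F d} {I : Fin d → Finset ℕ}
    (h : ∀ x ∈ T.support, ∀ i, x i ∈ I i) : trestrict T I = T :=
  (Finsupp.filter_eq_self_iff _ T).2 fun x hx => h x (Finsupp.mem_support_iff.2 hx)

end Restrict

theorem isLinearCoreRank_rank_trestrict_coordSets {F : Type*} [Zero F] {d : ℕ}
    {rank : TensorD F d → ℝ} {L β r₀ : ℝ} (hnn : ∀ T, 0 ≤ rank T)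
    (hcore : ∀ T : TensorD F d, r₀ ≤ rank T →
      ∃ J : Fin d → Finset ℕ, (∀ i, ((J i).card : ℝ) ≤ L * rank T) ∧
        β * rank T ≤ rank (trestrict T J))
    (hmono : ∀ (T : TensorD F d) (I : Fin d → Finset ℕ), rank (trestrict T I) ≤ rank T)
    (hlip : ∀ (T : TensorD F d) (I J : Fin d → Finset ℕ), (∀ i, I i ⊆ J i) →
      rank (trestrict T J) ≤ rank (trestrict T I) + ∑ i, ((J i \ I i).card : ℝ))
    (n : Fin d → ℕ) (T : TensorD F d) :
    IsLinearCoreRank (fun S => rank (trestrict T (coordSets n S))) (d * L) (min β 1) r₀ where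
  nonneg _ := hnn _
  mono S S' h := by
    have hinter : (fun i => coordSets n S' i ∩ coordSets n S i) = coordSets n S :=
      funext fun i => inter_eq_right.2 (coordSets_mono h i)
    simpa only [trestrict_trestrict, hinter] using
      hmono (trestrict T (coordSets n S')) (coordSets n S)
  le_add_card_sdiff S S' h := by
    simpa only [← coordSets_sdiff, ← Nat.cast_sum, sum_card_coordSets]
      using hlip T _ _ (coordSets_mono h)
  exists_core S hS := by
    obtain ⟨J, hJcard, hJcore⟩ := hcore _ hS
    refine ⟨{x ∈ S | (x.2 : ℕ) ∈ J x.1}, filter_subset _ _, ?_, ?_⟩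
    · rw [← sum_card_coordSets]
      push_cast
      calc ∑ i, ((coordSets n {x ∈ S | (x.2 : ℕ) ∈ J x.1} i).card : ℝ)
          ≤ ∑ i, ((J i).card : ℝ) := sum_le_sum fun i _ => by
            rw [coordSets_filter]
            exact_mod_cast card_le_card inter_subset_right
        _ ≤ ∑ _i : Fin d, L * rank (trestrict T (coordSets n S)) := sum_le_sum fun i _ => hJcard i
        _ = d * L * rank (trestrict T (coordSets n S)) := by simp [mul_assoc]
    · have hfilter : coordSets n {x ∈ S | (x.2 : ℕ) ∈ J x.1} = fun i => coordSets n S i ∩ J i :=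
        funext (coordSets_filter S J)
      rw [hfilter, ← trestrict_trestrict]
      exact (mul_le_mul_of_nonneg_right (min_le_left _ _) (hnn _)).trans hJcore

/-- **Random restriction theorem from the linear core property** (Theorem 4.3): if a rank
function on `d`-tensors over a field `F` is nonnegative, satisfies the linear core property
(with constants `L, β > 0` and rank threshold `r₀`), monotonicity under restrictions and the
restriction Lipschitz property, then for every `σ ∈ (0,1]` there are `C, κ > 0` such that for
every `d`-tensor `T` on `[n₁]×⋯×[n_d]`, the restriction of `T` to `σ`-random subsets
`Iᵢ ⊆ [nᵢ]` has rank at least `κ·rank T` with probability at least `1 - C·e^{-κ·rank T}`. -/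
theorem random_restriction_from_linear_core
    (F : Type) [Field F] (d : ℕ) (rank : TensorD F d → ℝ)
    (L β r₀ : ℝ) (hL : 0 < L) (hβ : 0 < β)
    -- rank takes nonnegative values
    (hnn : ∀ T, 0 ≤ rank T)
    -- linear core property with constants L, β and threshold r₀
    (hcore : ∀ T : TensorD F d, r₀ ≤ rank T →
      ∃ J : Fin d → Finset ℕ, (∀ i, ((J i).card : ℝ) ≤ L * rank T) ∧
        β * rank T ≤ rank (trestrict T J))
    -- monotonicity under restrictions
    (hmono : ∀ (T : TensorD F d) (I : Fin d → Finset ℕ), rank (trestrict T I) ≤ rank T)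
    -- restriction Lipschitz property
    (hlip : ∀ (T : TensorD F d) (I J : Fin d → Finset ℕ), (∀ i, I i ⊆ J i) →
      rank (trestrict T J) ≤ rank (trestrict T I) + ∑ i, ((J i \ I i).card : ℝ))
    (σ : ℝ) (hσ0 : 0 < σ) (hσ1 : σ ≤ 1) :
    ∃ C κ : ℝ, 0 < C ∧ 0 < κ ∧
      ∀ (n : Fin d → ℕ) (T : TensorD F d),
        -- T is a tensor on [n₁]×⋯×[n_d]
        (∀ x ∈ T.support, ∀ i, x i < n i) →
        1 - C * Real.exp (-κ * rank T) ≤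
          tensorPr n σ (fun I =>
            κ * rank T ≤ rank (trestrict T (fun i => (I i).image Fin.val))) := by
  obtain ⟨C, κ, hC, hκ, hbound⟩ := IsLinearCoreRank.exists_one_sub_mul_exp_le_prob (r₀ := r₀)
    hσ0 hσ1 (lt_min hβ one_pos) (min_le_right β 1) (by positivity : (0 : ℝ) ≤ d * L)
  refine ⟨C, κ, hC, hκ, fun n T hT => ?_⟩
  have hfull : trestrict T (coordSets n univ) = T :=
    trestrict_eq_self fun x hx i => by rw [coordSets_univ, mem_range]; exact hT x hx i
  have hT' := hbound _ _ (isLinearCoreRank_rank_trestrict_coordSets hnn hcore hmono hlip n T)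
  rw [hfull] at hT'
  rwa [tensorPr_eq_prob]
end
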